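/- arXiv:2107.06905 — 4 statements merged into one kernel-verified Lean document; each statement's English description precedes it below -/
import Mathlib

section
/- (Non-duplication invariant) For every sentence W = w_1, …, w_n and every reachable configuration (σ, β, B, φ, A, O) of the Bubble-Hybrid transition system for W, the content map φ is injective on B: no two distinct bubbles in B have equal content sets. -/
/-- Ground node set `V`: `none` is the dummy root `RT`,
`some i` represents the word `w_{i+1}` (0-indexed internally). -/
abbrev BNode (n : ℕ) := Option (Fin n)

/-- A parser configuration `(σ, β, B, φ, A, O)`.
The stack's top is the head of `stack`; the buffer's front is the head of `buffer`. -/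
structure Config (n : ℕ) (L : Type*) where
  stack : List ℕ
  buffer : List ℕ
  bubbles : Finset ℕ
  content : ℕ → Set (BNode n)
  arcs : Set (ℕ × L × ℕ)
  openB : Finset ℕ

/-- `α1 → α2`: there is an arc from `α1` to `α2` with some label. -/
def ArcRel {L : Type*} (arcs : Set (ℕ × L × ℕ)) (a b : ℕ) : Prop :=
  ∃ l, (a, l, b) ∈ arcs

/-- Projection `ψ(α)`: union of the contents of all bubbles reachable from `α`
(reflexive-transitive closure of the arc relation). -/
def projOf {n : ℕ} {L : Type*} (arcs : Set (ℕ × L × ℕ)) (φ : ℕ → Set (BNode n))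
    (α : ℕ) : Set (BNode n) :=
  {v | ∃ α', Relation.ReflTransGen (ArcRel arcs) α α' ∧ v ∈ φ α'}

/-- `ψ` of a configuration. -/
def Config.proj {n : ℕ} {L : Type*} (c : Config n L) (α : ℕ) : Set (BNode n) :=
  projOf c.arcs c.content α

/-- Initial configuration `c^i(W)`: bubble `0` is the singleton `{RT}`,
bubble `i` (for `1 ≤ i ≤ n`) is the singleton `{w_i}`. -/
def initConfig (n : ℕ) (L : Type*) : Config n L where
  stack := [0]
  buffer := (List.range n).map (· + 1)
  bubbles := Finset.range (n + 1)
  content := fun i =>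
    {v | (i = 0 ∧ v = none) ∨ ∃ k : Fin n, i = (k : ℕ) + 1 ∧ v = some k}
  arcs := ∅
  openB := ∅

/-- Terminal configuration: empty buffer, and the stack is the single bubble
with content `{RT}`. -/
def Terminal {n : ℕ} {L : Type*} (c : Config n L) : Prop :=
  c.buffer = [] ∧ ∃ r, c.stack = [r] ∧ c.content r = {(none : BNode n)}

/-- The Bubble-Hybrid transitions. -/
inductive Step {n : ℕ} {L : Type*} (conj : L) : Config n L → Config n L → Prop
  | shift (c : Config n L) (b1 : ℕ) (β : List ℕ)
      (hbuf : c.buffer = b1 :: β) :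
      Step conj c { c with stack := b1 :: c.stack, buffer := β }
  | leftArc (c : Config n L) (lbl : L) (s1 : ℕ) (σ : List ℕ) (b1 : ℕ) (β : List ℕ)
      (hstk : c.stack = s1 :: σ) (hbuf : c.buffer = b1 :: β)
      (hs1 : s1 ∉ c.openB) (hb1 : b1 ∉ c.openB)
      (hroot : c.content s1 ≠ {(none : BNode n)}) :
      Step conj c { c with stack := σ, arcs := insert (b1, lbl, s1) c.arcs }
  | rightArc (c : Config n L) (lbl : L) (s1 s2 : ℕ) (σ : List ℕ)
      (hstk : c.stack = s1 :: s2 :: σ)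
      (hs1 : s1 ∉ c.openB) (hs2 : s2 ∉ c.openB) :
      Step conj c { c with stack := s2 :: σ, arcs := insert (s2, lbl, s1) c.arcs }
  | bubbleOpen (c : Config n L) (lbl : L) (s1 s2 : ℕ) (σ : List ℕ) (α : ℕ)
      (hstk : c.stack = s1 :: s2 :: σ)
      (hs1 : s1 ∉ c.openB) (hs2 : s2 ∉ c.openB)
      (hroot : c.content s2 ≠ {(none : BNode n)})
      (hfresh : α ∉ c.bubbles) :
      Step conj c
        { stack := α :: σ
          buffer := c.buffer
          bubbles := insert α c.bubbles
          content := Function.update c.content α (c.proj s2 ∪ c.proj s1)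
          arcs := insert (α, conj, s2) (insert (α, lbl, s1) c.arcs)
          openB := insert α c.openB }
  | bubbleAttach (c : Config n L) (lbl : L) (s1 s2 : ℕ) (σ : List ℕ)
      (hstk : c.stack = s1 :: s2 :: σ)
      (hs1 : s1 ∉ c.openB) (hs2 : s2 ∈ c.openB) :
      Step conj c
        { c with
          stack := s2 :: σ
          content := Function.update c.content s2 (c.content s2 ∪ c.proj s1)
          arcs := insert (s2, lbl, s1) c.arcs }
  | bubbleClose (c : Config n L) (s1 : ℕ) (σ : List ℕ)
      (hstk : c.stack = s1 :: σ) (hs1 : s1 ∈ c.openB) :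
      Step conj c
        { c with stack := σ, buffer := s1 :: c.buffer, openB := c.openB.erase s1 }

/-- A configuration is reachable if it is obtained from the initial configuration
by a finite sequence of transitions. -/
def Reachable {n : ℕ} {L : Type*} (conj : L) (c : Config n L) : Prop :=
  Relation.ReflTransGen (Step conj) (initConfig n L) c

/-- `arcs` forms a directed tree on the bubble set `B`. -/
def IsTreeOn {L : Type*} (B : Finset ℕ) (arcs : Set (ℕ × L × ℕ)) : Prop :=
  (∀ a l b, (a, l, b) ∈ arcs → a ∈ B ∧ b ∈ B) ∧
  ∃ r ∈ B,
    (¬ ∃ p l, (p, l, r) ∈ arcs) ∧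
    (∀ b ∈ B, b ≠ r → ∃! pl : ℕ × L, (pl.1, pl.2, b) ∈ arcs) ∧
    (∀ b ∈ B, Relation.ReflTransGen (ArcRel arcs) r b)

/-- Well-formed bubble tree on a length-`n` sentence. -/
def WellFormed {L : Type*} (n : ℕ) (B : Finset ℕ) (φ : ℕ → Set (BNode n))
    (arcs : Set (ℕ × L × ℕ)) : Prop :=
  IsTreeOn B arcs ∧
  -- contents are nonempty
  (∀ α ∈ B, (φ α).Nonempty) ∧
  -- no partial overlap
  (∀ α1 ∈ B, ∀ α2 ∈ B, φ α1 ∩ φ α2 = ∅ ∨ φ α1 ⊆ φ α2 ∨ φ α2 ⊆ φ α1) ∧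
  -- non-duplication
  (∀ α1 ∈ B, ∀ α2 ∈ B, φ α1 = φ α2 → α1 = α2) ∧
  -- lexical coverage
  (∀ v : BNode n, ∃ α ∈ B, φ α = {v}) ∧
  -- roothood
  (∃ r ∈ B, φ r = {(none : BNode n)} ∧
    (∀ α ∈ B, (none : BNode n) ∈ φ α → α = r) ∧
    (¬ ∃ p l, (p, l, r) ∈ arcs) ∧
    (∀ b ∈ B, Relation.ReflTransGen (ArcRel arcs) r b)) ∧
  -- containment
  (∀ α1 ∈ B, ∀ α2 ∈ B, φ α2 ⊂ φ α1 → Relation.ReflTransGen (ArcRel arcs) α1 α2)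

/-- Projectivity conditions for a well-formed bubble tree. -/
def Projective {L : Type*} (n : ℕ) (B : Finset ℕ) (φ : ℕ → Set (BNode n))
    (arcs : Set (ℕ × L × ℕ)) : Prop :=
  -- continuous coverage
  (∀ α ∈ B, ∀ i j k : Fin n, i < k → k < j →
    some i ∈ φ α → some j ∈ φ α → some k ∈ φ α) ∧
  -- continuous projections
  (∀ α ∈ B, ∀ i j k : Fin n, i < k → k < j →
    some i ∈ projOf arcs φ α → some j ∈ projOf arcs φ α →
    some k ∈ projOf arcs φ α) ∧
  -- contained projections
  (∀ α1 ∈ B, ∀ α2 ∈ B, Relation.TransGen (ArcRel arcs) α1 α2 →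
    projOf arcs φ α2 ⊆ φ α1 ∨ projOf arcs φ α2 ∩ φ α1 = ∅)

section NonDupProof

open Relation List

variable {n : ℕ} {L : Type*}

lemma reach_mono {A A' : Set (ℕ × L × ℕ)} (h : A ⊆ A') {x y : ℕ}
    (hxy : ReflTransGen (ArcRel A) x y) : ReflTransGen (ArcRel A') x y :=
  by
  induction hxy with
  | refl => exact .refl
  | tail _ hbc ih => obtain ⟨l, hl⟩ := hbc; exact ih.tail ⟨l, h hl⟩

lemma reach_insert_iff {A : Set (ℕ × L × ℕ)} {p t : ℕ} {l0 : L} {x y : ℕ} :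
    ReflTransGen (ArcRel (insert (p, l0, t) A)) x y ↔
      ReflTransGen (ArcRel A) x y ∨
        (ReflTransGen (ArcRel A) x p ∧ ReflTransGen (ArcRel A) t y) := by
  constructor
  · intro h
    induction h using ReflTransGen.head_induction_on with
    | refl => exact Or.inl .refl
    | head hab _ ih =>
      rename_i a b _
      obtain ⟨l, hl⟩ := hab
      rcases Set.mem_insert_iff.mp hl with heq | hmem
      · obtain ⟨rfl, rfl, rfl⟩ : a = p ∧ l = l0 ∧ b = t := by
          simpa [Prod.ext_iff] using heq
        rcases ih with h' | ⟨_, h2⟩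
        · exact Or.inr ⟨.refl, h'⟩
        · exact Or.inr ⟨.refl, h2⟩
      · rcases ih with h' | ⟨h1, h2⟩
        · exact Or.inl (ReflTransGen.head ⟨l, hmem⟩ h')
        · exact Or.inr ⟨ReflTransGen.head ⟨l, hmem⟩ h1, h2⟩
  · rintro (h | ⟨h1, h2⟩)
    · exact reach_mono (Set.subset_insert _ _) h
    · exact (reach_mono (Set.subset_insert _ _) h1).trans
        (ReflTransGen.head ⟨l0, Set.mem_insert _ _⟩
          (reach_mono (Set.subset_insert _ _) h2))

lemma reach_confined_mem {A : Set (ℕ × L × ℕ)} {S : Set ℕ}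
    (hcl : ∀ a (lb : L) b, a ∈ S → (a, lb, b) ∈ A → b ∈ S) {x y : ℕ} (hx : x ∈ S)
    (hxy : ReflTransGen (ArcRel A) x y) : y ∈ S := by
  induction hxy with
  | refl => exact hx
  | tail _ hbc ih => obtain ⟨l, hl⟩ := hbc; exact hcl _ _ _ ih hl

lemma reach_confined_iff {A A' : Set (ℕ × L × ℕ)} {S : Set ℕ}
    (hagree : ∀ a (lb : L) b, a ∈ S → ((a, lb, b) ∈ A' ↔ (a, lb, b) ∈ A))
    (hcl : ∀ a (lb : L) b, a ∈ S → (a, lb, b) ∈ A → b ∈ S) {x y : ℕ} (hx : x ∈ S) :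
    ReflTransGen (ArcRel A') x y ↔ ReflTransGen (ArcRel A) x y := by
  constructor
  · intro h
    induction h with
    | refl => exact .refl
    | tail _ hbc ih =>
      obtain ⟨l, hl⟩ := hbc
      have hb := reach_confined_mem hcl hx ih
      exact ih.tail ⟨l, (hagree _ _ _ hb).mp hl⟩
  · intro h
    induction h with
    | refl => exact .refl
    | tail hxb hbc ih =>
      obtain ⟨l, hl⟩ := hbc
      have hb := reach_confined_mem hcl hx hxb
      exact ih.tail ⟨l, (hagree _ _ _ hb).mpr hl⟩

lemma content_subset_projOf {A : Set (ℕ × L × ℕ)} {φ : ℕ → Set (BNode n)} {x : ℕ} :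
    φ x ⊆ projOf A φ x := fun _ hv => ⟨x, .refl, hv⟩

lemma projOf_subset_of_reach {A : Set (ℕ × L × ℕ)} {φ : ℕ → Set (BNode n)} {x y : ℕ}
    (h : ReflTransGen (ArcRel A) x y) : projOf A φ y ⊆ projOf A φ x :=
  fun _ ⟨z, hz, hv⟩ => ⟨z, h.trans hz, hv⟩

lemma projOf_confined {A A' : Set (ℕ × L × ℕ)} {φ φ' : ℕ → Set (BNode n)} {S : Set ℕ}
    (hagree : ∀ a (lb : L) b, a ∈ S → ((a, lb, b) ∈ A' ↔ (a, lb, b) ∈ A))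
    (hcl : ∀ a (lb : L) b, a ∈ S → (a, lb, b) ∈ A → b ∈ S)
    (hφ : ∀ a ∈ S, φ' a = φ a) {x : ℕ} (hx : x ∈ S) :
    projOf A' φ' x = projOf A φ x := by
  ext v
  constructor
  · rintro ⟨y, hy, hv⟩
    have hy' := (reach_confined_iff hagree hcl hx).mp hy
    exact ⟨y, hy', by rwa [hφ y (reach_confined_mem hcl hx hy')] at hv⟩
  · rintro ⟨y, hy, hv⟩
    exact ⟨y, (reach_confined_iff hagree hcl hx).mpr hy,
      by rwa [hφ y (reach_confined_mem hcl hx hy)]⟩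

/-- The inductive invariant. -/
structure BInv (c : Config n L) : Prop where
  nodup : (c.stack ++ c.buffer).Nodup
  rootsB : ∀ x ∈ c.stack ++ c.buffer, x ∈ c.bubbles
  arcsB : ∀ a (l : L) b, (a, l, b) ∈ c.arcs → a ∈ c.bubbles ∧ b ∈ c.bubbles
  ne : ∀ α ∈ c.bubbles, (c.content α).Nonempty
  covered : ∀ α ∈ c.bubbles, ∃ r ∈ c.stack ++ c.buffer,
    ReflTransGen (ArcRel c.arcs) r α
  disj : ∀ r1 ∈ c.stack ++ c.buffer, ∀ r2 ∈ c.stack ++ c.buffer, r1 ≠ r2 →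
    ∀ v, v ∈ c.proj r1 → v ∈ c.proj r2 → False
  inj : ∀ α1 ∈ c.bubbles, ∀ α2 ∈ c.bubbles, c.content α1 = c.content α2 → α1 = α2

lemma BInv.not_reach {c : Config n L} (h : BInv c) {r p : ℕ}
    (hr : r ∈ c.stack ++ c.buffer) (hp : p ∈ c.stack ++ c.buffer) (hne : r ≠ p) :
    ¬ ReflTransGen (ArcRel c.arcs) r p := by
  intro hreach
  obtain ⟨v, hv⟩ := h.ne p (h.rootsB p hp)
  exact h.disj r hr p hp hne v (projOf_subset_of_reach hreach (content_subset_projOf hv))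
    (content_subset_projOf hv)

lemma BInv.no_two {c : Config n L} (h : BInv c) {γ s1 s2 : ℕ} (hγ : γ ∈ c.bubbles)
    (hs1 : s1 ∈ c.stack ++ c.buffer) (hs2 : s2 ∈ c.stack ++ c.buffer) (hne : s1 ≠ s2)
    (h1 : c.proj s1 ⊆ c.content γ) (h2 : c.content s2 ⊆ c.content γ) : False := by
  obtain ⟨r, hr, hrγ⟩ := h.covered γ hγ
  obtain ⟨v1, hv1⟩ := h.ne s1 (h.rootsB s1 hs1)
  obtain ⟨v2, hv2⟩ := h.ne s2 (h.rootsB s2 hs2)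
  have hsub : c.content γ ⊆ c.proj r :=
    fun v hv => projOf_subset_of_reach hrγ (content_subset_projOf hv)
  have hr1 : r = s1 := by
    by_contra hne'
    exact h.disj r hr s1 hs1 hne' v1 (hsub (h1 (content_subset_projOf hv1)))
      (content_subset_projOf hv1)
  have hr2 : r = s2 := by
    by_contra hne'
    exact h.disj r hr s2 hs2 hne' v2 (hsub (h2 hv2)) (content_subset_projOf hv2)
  exact hne (hr1 ▸ hr2 ▸ rfl)

end NonDupProof
section NonDupProof2
open Relation List
variable {n : ℕ} {L : Type*}

/-- Common preservation argument for LeftArc, RightArc and BubbleAttach: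
the top bubble `s1` of the roots is popped and attached under `p`,
whose content may grow (within `ψ(p) ∪ ψ(s1)`). -/
lemma BInv.arc_step {c c' : Config n L} (h : BInv c) {s1 p : ℕ} {lbl : L}
    (hR : c.stack ++ c.buffer = s1 :: (c'.stack ++ c'.buffer))
    (hp : p ∈ c'.stack ++ c'.buffer)
    (harcs : c'.arcs = insert (p, lbl, s1) c.arcs)
    (hB : c'.bubbles = c.bubbles)
    (hφoff : ∀ a, a ≠ p → c'.content a = c.content a)
    (hφp : c.content p ⊆ c'.content p)
    (hφp' : c'.content p ⊆ c.proj p ∪ c.proj s1)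
    (hinjp : ∀ γ ∈ c.bubbles, γ ≠ p → c'.content p ≠ c.content γ) : BInv c' := by
  have hnodup : (s1 :: (c'.stack ++ c'.buffer)).Nodup := hR ▸ h.nodup
  have hs1R' : s1 ∉ c'.stack ++ c'.buffer := (List.nodup_cons.mp hnodup).1
  have hR'sub : ∀ x ∈ c'.stack ++ c'.buffer, x ∈ c.stack ++ c.buffer := by
    intro x hx; rw [hR]; exact List.mem_cons_of_mem _ hx
  have hs1 : s1 ∈ c.stack ++ c.buffer := by rw [hR]; exact List.mem_cons_self
  have hpold : p ∈ c.stack ++ c.buffer := hR'sub p hp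
  have hps1 : p ≠ s1 := fun he => hs1R' (he ▸ hp)
  have hpB : p ∈ c.bubbles := h.rootsB p hpold
  have hs1B : s1 ∈ c.bubbles := h.rootsB s1 hs1
  -- projections of roots other than p are unchanged
  set S : Set ℕ := {z | ¬ ReflTransGen (ArcRel c.arcs) z p} with hS
  have hcl : ∀ a (lb : L) b, a ∈ S → (a, lb, b) ∈ c.arcs → b ∈ S := by
    intro a lb b ha hab hb
    exact ha (ReflTransGen.head ⟨lb, hab⟩ hb)
  have hagree : ∀ a (lb : L) b, a ∈ S →
      ((a, lb, b) ∈ c'.arcs ↔ (a, lb, b) ∈ c.arcs) := by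
    intro a lb b ha
    rw [harcs, Set.mem_insert_iff]
    constructor
    · rintro (heq | hm)
      · have hap : a = p := by simpa [Prod.ext_iff] using congrArg Prod.fst heq
        exact absurd ReflTransGen.refl (hap ▸ ha)
      · exact hm
    · exact Or.inr
  have hφS : ∀ a ∈ S, c'.content a = c.content a := fun a ha =>
    hφoff a (fun he => ha (he ▸ ReflTransGen.refl))
  have hprojeq : ∀ r, ¬ ReflTransGen (ArcRel c.arcs) r p → c'.proj r = c.proj r :=
    fun r hr => projOf_confined hagree hcl hφS hr
  have hprojroot : ∀ r ∈ c'.stack ++ c'.buffer, r ≠ p → c'.proj r = c.proj r :=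
    fun r hr hne => hprojeq r (h.not_reach (hR'sub r hr) hpold hne)
  have hprojp : c'.proj p ⊆ c.proj p ∪ c.proj s1 := by
    rintro v ⟨y, hy, hv⟩
    rw [harcs] at hy
    rcases reach_insert_iff.mp hy with hy' | ⟨_, hy'⟩
    · by_cases hyp : y = p
      · subst hyp; exact hφp' hv
      · exact Or.inl ⟨y, hy', by rwa [hφoff y hyp] at hv⟩
    · by_cases hyp : y = p
      · subst hyp; exact hφp' hv
      · exact Or.inr ⟨y, hy', by rwa [hφoff y hyp] at hv⟩
  refine ⟨(List.nodup_cons.mp hnodup).2, fun x hx => hB ▸ h.rootsB x (hR'sub x hx),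
    ?_, ?_, ?_, ?_, ?_⟩
  · intro a l b hab
    rw [harcs] at hab; rw [hB]
    rcases Set.mem_insert_iff.mp hab with heq | hm
    · obtain ⟨rfl, _, rfl⟩ : a = p ∧ l = lbl ∧ b = s1 := by
        simpa [Prod.ext_iff] using heq
      exact ⟨hpB, hs1B⟩
    · exact h.arcsB a l b hm
  · intro α hα
    rw [hB] at hα
    by_cases hαp : α = p
    · subst hαp; exact (h.ne α hα).mono hφp
    · rw [hφoff α hαp]; exact h.ne α hα
  · intro α hα
    rw [hB] at hα
    obtain ⟨r, hr, hrα⟩ := h.covered α hα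
    rw [hR] at hr
    have hmono : ReflTransGen (ArcRel c.arcs) r α →
        ReflTransGen (ArcRel c'.arcs) r α :=
      fun hh => reach_mono (harcs ▸ Set.subset_insert _ _) hh
    rcases List.mem_cons.mp hr with rfl | hr'
    · exact ⟨p, hp, ReflTransGen.head ⟨lbl, harcs ▸ Set.mem_insert _ _⟩ (hmono hrα)⟩
    · exact ⟨r, hr', hmono hrα⟩
  · intro r1 hr1 r2 hr2 hne v hv1 hv2
    have key : ∀ r ∈ c'.stack ++ c'.buffer, v ∈ c'.proj r →
        (v ∈ c.proj r ∨ (r = p ∧ v ∈ c.proj s1)) := by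
      intro r hr hv
      by_cases hrp : r = p
      · subst hrp
        rcases hprojp hv with h' | h'
        · exact Or.inl h'
        · exact Or.inr ⟨rfl, h'⟩
      · rw [hprojroot r hr hrp] at hv; exact Or.inl hv
    rcases key r1 hr1 hv1 with k1 | ⟨rfl, k1⟩ <;> rcases key r2 hr2 hv2 with k2 | k2
    · exact h.disj r1 (hR'sub r1 hr1) r2 (hR'sub r2 hr2) hne v k1 k2
    · obtain ⟨rfl, k2⟩ := k2
      exact h.disj r1 (hR'sub r1 hr1) s1 hs1 (fun he => hs1R' (he ▸ hr1)) v k1 k2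
    · exact h.disj s1 hs1 r2 (hR'sub r2 hr2)
        (fun he => hs1R' (he ▸ hr2)) v k1 k2
    · obtain ⟨rfl, _⟩ := k2; exact hne rfl
  · intro α1 hα1 α2 hα2 heq
    rw [hB] at hα1 hα2
    by_cases h1p : α1 = p <;> by_cases h2p : α2 = p
    · rw [h1p, h2p]
    · subst h1p
      exact absurd (heq.trans (hφoff α2 h2p)) (hinjp α2 hα2 h2p)
    · subst h2p
      exact absurd (heq.symm.trans (hφoff α1 h1p)) (hinjp α1 hα1 h1p)
    · rw [hφoff α1 h1p, hφoff α2 h2p] at heq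
      exact h.inj α1 hα1 α2 hα2 heq

end NonDupProof2
section NonDupProof3
open Relation List
variable {n : ℕ} {L : Type*}

lemma BInv.perm_step {c c' : Config n L} (h : BInv c)
    (hperm : (c'.stack ++ c'.buffer).Perm (c.stack ++ c.buffer))
    (hB : c'.bubbles = c.bubbles) (hφ : c'.content = c.content)
    (harcs : c'.arcs = c.arcs) : BInv c' := by
  have hproj : c'.proj = c.proj := by
    unfold Config.proj; rw [hφ, harcs]
  refine ⟨hperm.symm.nodup h.nodup, fun x hx => hB ▸ h.rootsB x (hperm.mem_iff.mp hx),
    fun a l b hab => hB ▸ h.arcsB a l b (harcs ▸ hab),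
    fun α hα => hφ ▸ h.ne α (hB ▸ hα),
    ?_, ?_, fun α1 hα1 α2 hα2 heq => h.inj α1 (hB ▸ hα1) α2 (hB ▸ hα2) (by rwa [hφ] at heq)⟩
  · intro α hα
    obtain ⟨r, hr, hrα⟩ := h.covered α (hB ▸ hα)
    exact ⟨r, hperm.mem_iff.mpr hr, harcs ▸ hrα⟩
  · intro r1 hr1 r2 hr2 hne v hv1 hv2
    exact h.disj r1 (hperm.mem_iff.mp hr1) r2 (hperm.mem_iff.mp hr2) hne v
      (hproj ▸ hv1) (hproj ▸ hv2)

lemma BInv.step {conj : L} {c c' : Config n L} (h : BInv c) (hs : Step conj c c') :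
    BInv c' := by
  cases hs with
  | shift b1 β hbuf =>
    exact h.perm_step (by rw [hbuf, List.cons_append]; exact List.perm_middle.symm)
      rfl rfl rfl
  | bubbleClose s1 σ hstk hs1 =>
    exact h.perm_step (by rw [hstk, List.cons_append]; exact List.perm_middle) rfl rfl rfl
  | leftArc lbl s1 σ b1 β hstk hbuf hso hbo hroot =>
    have hb1 : b1 ∈ σ ++ c.buffer :=
      List.mem_append_right _ (by rw [hbuf]; exact List.mem_cons_self)
    refine h.arc_step (p := b1) (by rw [hstk]; rfl) hb1 rfl rfl (fun a _ => rfl)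
      subset_rfl (fun v hv => Or.inl (content_subset_projOf hv)) ?_
    intro γ hγ hne heq
    have hb1' : b1 ∈ c.stack ++ c.buffer := by
      rw [hstk]; exact List.mem_cons_of_mem _ hb1
    exact hne (h.inj γ hγ b1 (h.rootsB b1 hb1') heq.symm)
  | rightArc lbl s1 s2 σ hstk hso hs2o =>
    have hs2 : s2 ∈ (s2 :: σ) ++ c.buffer := List.mem_append_left _ (List.mem_cons_self)
    refine h.arc_step (p := s2) (by rw [hstk]; rfl) hs2 rfl rfl (fun a _ => rfl)
      subset_rfl (fun v hv => Or.inl (content_subset_projOf hv)) ?_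
    intro γ hγ hne heq
    have hs2' : s2 ∈ c.stack ++ c.buffer := by
      rw [hstk]; exact List.mem_cons_of_mem _ hs2
    exact hne (h.inj γ hγ s2 (h.rootsB s2 hs2') heq.symm)
  | bubbleAttach lbl s1 s2 σ hstk hso hs2o =>
    have hs2 : s2 ∈ (s2 :: σ) ++ c.buffer := List.mem_append_left _ (List.mem_cons_self)
    have hupd : Function.update c.content s2 (c.content s2 ∪ c.proj s1) s2
        = c.content s2 ∪ c.proj s1 := Function.update_self _ _ _
    have hsub1 : c.content s2 ⊆ Function.update c.content s2 (c.content s2 ∪ c.proj s1) s2 := by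
      rw [hupd]; exact Set.subset_union_left
    have hsub2 : Function.update c.content s2 (c.content s2 ∪ c.proj s1) s2 ⊆
        c.proj s2 ∪ c.proj s1 := by
      rw [hupd]
      exact Set.union_subset (fun v hv => Or.inl (content_subset_projOf hv))
        Set.subset_union_right
    refine h.arc_step (p := s2) (by rw [hstk]; rfl) hs2 rfl rfl
      (fun a ha => Function.update_of_ne ha _ _) hsub1 hsub2 ?_
    · intro γ hγ hne heq
      replace heq : c.content s2 ∪ c.proj s1 = c.content γ := by
        rw [← hupd]; exact heq
      have hs1 : s1 ∈ c.stack ++ c.buffer := by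
        rw [hstk]; exact List.mem_cons_self
      have hs2' : s2 ∈ c.stack ++ c.buffer := by
        rw [hstk]; exact List.mem_cons_of_mem _ hs2
      have hnd : (c.stack ++ c.buffer).Nodup := h.nodup
      rw [hstk] at hnd
      have hs1s2 : s1 ≠ s2 := by
        intro he
        exact (List.nodup_cons.mp hnd).1 (he ▸ (List.mem_cons_self : s2 ∈ s2 :: (σ ++ c.buffer)))
      exact h.no_two hγ hs1 hs2' hs1s2 (heq ▸ Set.subset_union_right)
        (heq ▸ Set.subset_union_left)
  | bubbleOpen lbl s1 s2 σ α hstk hso hs2o hroot hfresh =>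
    -- notation
    have hs1 : s1 ∈ c.stack ++ c.buffer := by rw [hstk]; exact List.mem_cons_self
    have hs2 : s2 ∈ c.stack ++ c.buffer := by
      rw [hstk]; exact List.mem_cons_of_mem _ (List.mem_cons_self)
    have hs1B := h.rootsB s1 hs1
    have hs2B := h.rootsB s2 hs2
    have hnd : (s1 :: s2 :: (σ ++ c.buffer)).Nodup := by
      have := h.nodup; rwa [hstk, List.cons_append, List.cons_append] at this
    have hs1s2 : s1 ≠ s2 := by
      intro he; exact (List.nodup_cons.mp hnd).1 (he ▸ List.mem_cons_self)
    have hs1R : s1 ∉ σ ++ c.buffer := fun hx =>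
      (List.nodup_cons.mp hnd).1 (List.mem_cons_of_mem _ hx)
    have hs2R : s2 ∉ σ ++ c.buffer :=
      (List.nodup_cons.mp (List.nodup_cons.mp hnd).2).1
    have hαR : ∀ x ∈ c.stack ++ c.buffer, x ≠ α :=
      fun x hx he => hfresh (he ▸ h.rootsB x hx)
    set A' := insert (α, conj, s2) (insert (α, lbl, s1) c.arcs) with hA'
    set φ' := Function.update c.content α (c.proj s2 ∪ c.proj s1) with hφ'
    have hupd : φ' α = c.proj s2 ∪ c.proj s1 := Function.update_self _ _ _
    have hφoff : ∀ a, a ≠ α → φ' a = c.content a := fun a ha =>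
      Function.update_of_ne ha _ _
    -- confinement away from α
    set S : Set ℕ := {z | z ≠ α} with hSdef
    have hcl : ∀ a (lb : L) b, a ∈ S → (a, lb, b) ∈ c.arcs → b ∈ S :=
      fun a lb b _ hab he => hfresh (he ▸ (h.arcsB a lb b hab).2)
    have hagree : ∀ a (lb : L) b, a ∈ S → ((a, lb, b) ∈ A' ↔ (a, lb, b) ∈ c.arcs) := by
      intro a lb b ha
      rw [hA', Set.mem_insert_iff, Set.mem_insert_iff]
      constructor
      · rintro (he | he | hm)
        · have hap : a = α := by simpa [Prod.ext_iff] using congrArg Prod.fst he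
          exact absurd hap ha
        · have hap : a = α := by simpa [Prod.ext_iff] using congrArg Prod.fst he
          exact absurd hap ha
        · exact hm
      · intro hm; exact Or.inr (Or.inr hm)
    have hφS : ∀ a ∈ S, φ' a = c.content a := fun a ha => hφoff a ha
    have hprojeq : ∀ x, x ≠ α → projOf A' φ' x = c.proj x :=
      fun x hx => projOf_confined hagree hcl hφS hx
    have hreach_eq : ∀ x, x ≠ α → ∀ y, ReflTransGen (ArcRel A') x y ↔
        ReflTransGen (ArcRel c.arcs) x y :=
      fun x hx y => reach_confined_iff hagree hcl hx
    -- projection of the new bubble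
    have hprojα : projOf A' φ' α ⊆ c.proj s2 ∪ c.proj s1 := by
      rintro v ⟨y, hy, hv⟩
      rcases (ReflTransGen.cases_head hy) with rfl | ⟨z, hz, hzy⟩
      · rw [hupd] at hv; exact hv
      · obtain ⟨l, hl⟩ := hz
        have hz' : z = s2 ∨ z = s1 := by
          rw [hA', Set.mem_insert_iff, Set.mem_insert_iff] at hl
          rcases hl with he | he | hm
          · have : α = α ∧ l = conj ∧ z = s2 := by simpa [Prod.ext_iff] using he
            exact Or.inl this.2.2
          · have : α = α ∧ l = lbl ∧ z = s1 := by simpa [Prod.ext_iff] using he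
            exact Or.inr this.2.2
          · exact absurd ((h.arcsB α l z hm).1) hfresh
        have hzα : z ≠ α := by
          rcases hz' with rfl | rfl
          · exact fun he => hfresh (he ▸ hs2B)
          · exact fun he => hfresh (he ▸ hs1B)
        have hzy' := (hreach_eq z hzα y).mp hzy
        have hyα : y ∈ S := reach_confined_mem hcl hzα hzy'
        rw [hφS y hyα] at hv
        rcases hz' with rfl | rfl
        · exact Or.inl ⟨y, hzy', hv⟩
        · exact Or.inr ⟨y, hzy', hv⟩
    refine ⟨?_, ?_, ?_, ?_, ?_, ?_, ?_⟩
    · -- nodup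
      refine List.nodup_cons.mpr ⟨fun hx => ?_, (List.nodup_cons.mp (List.nodup_cons.mp hnd).2).2⟩
      have hαold : α ∈ c.stack ++ c.buffer := by
        rw [hstk, List.cons_append, List.cons_append]
        exact List.mem_cons_of_mem _ (List.mem_cons_of_mem _ hx)
      exact hfresh (h.rootsB α hαold)
    · intro x hx
      rcases List.mem_cons.mp hx with rfl | hx'
      · exact Finset.mem_insert_self _ _
      · exact Finset.mem_insert_of_mem (h.rootsB x (by
          rw [hstk, List.cons_append, List.cons_append]
          exact List.mem_cons_of_mem _ (List.mem_cons_of_mem _ hx')))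
    · intro a l b hab
      rw [hA', Set.mem_insert_iff, Set.mem_insert_iff] at hab
      rcases hab with he | he | hm
      · obtain ⟨rfl, -, rfl⟩ : a = α ∧ l = conj ∧ b = s2 := by simpa [Prod.ext_iff] using he
        exact ⟨Finset.mem_insert_self _ _, Finset.mem_insert_of_mem hs2B⟩
      · obtain ⟨rfl, -, rfl⟩ : a = α ∧ l = lbl ∧ b = s1 := by simpa [Prod.ext_iff] using he
        exact ⟨Finset.mem_insert_self _ _, Finset.mem_insert_of_mem hs1B⟩
      · obtain ⟨h1, h2⟩ := h.arcsB a l b hm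
        exact ⟨Finset.mem_insert_of_mem h1, Finset.mem_insert_of_mem h2⟩
    · intro b hb
      rcases Finset.mem_insert.mp hb with rfl | hb'
      · have hss : c.content s2 ⊆ φ' b := by
          rw [hupd]; exact fun v hv => Or.inl (content_subset_projOf hv)
        exact (h.ne s2 hs2B).mono hss
      · have : (φ' b).Nonempty := by
          rw [hφoff b (fun he => hfresh (he ▸ hb'))]; exact h.ne b hb'
        exact this
    · intro b hb
      rcases Finset.mem_insert.mp hb with rfl | hβ'
      · exact ⟨b, List.mem_cons_self, ReflTransGen.refl⟩
      · obtain ⟨r, hr, hrβ⟩ := h.covered b hβ'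
        rw [hstk, List.cons_append, List.cons_append] at hr
        have hmono : ReflTransGen (ArcRel c.arcs) r b → ReflTransGen (ArcRel A') r b :=
          fun hh => reach_mono (fun x hx =>
            Set.mem_insert_of_mem _ (Set.mem_insert_of_mem _ hx)) hh
        rcases List.mem_cons.mp hr with rfl | hr'
        · exact ⟨α, List.mem_cons_self, ReflTransGen.head
            ⟨lbl, Set.mem_insert_of_mem _ (Set.mem_insert _ _)⟩ (hmono hrβ)⟩
        · rcases List.mem_cons.mp hr' with rfl | hr''
          · exact ⟨α, List.mem_cons_self, ReflTransGen.head
              ⟨conj, Set.mem_insert _ _⟩ (hmono hrβ)⟩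
          · exact ⟨r, List.mem_cons_of_mem _ hr'', hmono hrβ⟩
    · intro r1 hr1 r2 hr2 hne v hv1 hv2
      have key : ∀ r, r ∈ (α :: σ) ++ c.buffer → v ∈ projOf A' φ' r →
          (r ≠ α ∧ v ∈ c.proj r) ∨ (r = α ∧ (v ∈ c.proj s2 ∨ v ∈ c.proj s1)) := by
        intro r hr hv
        by_cases hrα : r = α
        · subst hrα; exact Or.inr ⟨rfl, hprojα hv⟩
        · rw [hprojeq r hrα] at hv; exact Or.inl ⟨hrα, hv⟩
      have hmemold : ∀ r, r ∈ (α :: σ) ++ c.buffer → r ≠ α →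
          r ∈ c.stack ++ c.buffer := by
        intro r hr hrα
        rcases List.mem_cons.mp hr with rfl | hr'
        · exact absurd rfl hrα
        · rw [hstk, List.cons_append, List.cons_append]
          exact List.mem_cons_of_mem _ (List.mem_cons_of_mem _ hr')
      have hnotin : ∀ r, r ∈ (α :: σ) ++ c.buffer → r ≠ α → r ≠ s1 ∧ r ≠ s2 := by
        intro r hr hrα
        rcases List.mem_cons.mp hr with rfl | hr'
        · exact absurd rfl hrα
        · exact ⟨fun he => hs1R (he ▸ hr'), fun he => hs2R (he ▸ hr')⟩
      rcases key r1 hr1 hv1 with ⟨h1α, k1⟩ | ⟨rfl, k1⟩ <;>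
        rcases key r2 hr2 hv2 with ⟨h2α, k2⟩ | ⟨h2e, k2⟩
      · exact h.disj r1 (hmemold r1 hr1 h1α) r2 (hmemold r2 hr2 h2α) hne v k1 k2
      · subst h2e
        obtain ⟨hn1, hn2⟩ := hnotin r1 hr1 h1α
        rcases k2 with k2 | k2
        · exact h.disj r1 (hmemold r1 hr1 h1α) s2 hs2 hn2 v k1 k2
        · exact h.disj r1 (hmemold r1 hr1 h1α) s1 hs1 hn1 v k1 k2
      · obtain ⟨hn1, hn2⟩ := hnotin r2 hr2 h2α
        rcases k1 with k1 | k1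
        · exact h.disj s2 hs2 r2 (hmemold r2 hr2 h2α) (fun he => hn2 he.symm) v k1 k2
        · exact h.disj s1 hs1 r2 (hmemold r2 hr2 h2α) (fun he => hn1 he.symm) v k1 k2
      · exact hne (h2e ▸ rfl)
    · intro α1 hα1 α2 hα2 heq
      replace heq : φ' α1 = φ' α2 := heq
      replace hα1 : α1 ∈ insert α c.bubbles := hα1
      replace hα2 : α2 ∈ insert α c.bubbles := hα2
      have main : ∀ γ ∈ c.bubbles, φ' α ≠ φ' γ ∨ γ = α := by
        intro γ hγ
        by_cases hγα : γ = α
        · exact Or.inr hγα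
        · left
          rw [hupd, hφoff γ hγα]
          intro heq'
          exact h.no_two hγ hs1 hs2 hs1s2 (heq' ▸ Set.subset_union_right)
            (fun v hv => heq' ▸ Or.inl (content_subset_projOf hv))
      rcases Finset.mem_insert.mp hα1 with rfl | h1' <;>
        rcases Finset.mem_insert.mp hα2 with h2' | h2'
      · exact h2' ▸ rfl
      · rcases main α2 h2' with hne' | he
        · exact absurd heq hne'
        · exact he.symm
      · subst h2'
        rcases main α1 h1' with hne' | he
        · exact absurd heq.symm hne'
        · exact he
      · rw [hφoff α1 (fun he => hfresh (he ▸ h1')),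
          hφoff α2 (fun he => hfresh (he ▸ h2'))] at heq
        exact h.inj α1 h1' α2 h2' heq

end NonDupProof3
section NonDupProof4
open Relation List
variable {n : ℕ} {L : Type*}

lemma reach_empty {x y : ℕ}
    (h : ReflTransGen (ArcRel (∅ : Set (ℕ × L × ℕ))) x y) : x = y := by
  induction h with
  | refl => rfl
  | tail _ hbc ih => obtain ⟨l, hl⟩ := hbc; exact absurd hl (Set.notMem_empty _)

lemma init_content_inter {i j : ℕ} {v : BNode n}
    (hi : v ∈ (initConfig n L).content i) (hj : v ∈ (initConfig n L).content j) :
    i = j := by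
  rcases hi with ⟨rfl, rfl⟩ | ⟨k, rfl, rfl⟩ <;> rcases hj with ⟨h1, h2⟩ | ⟨k', h1, h2⟩
  · exact h1.symm
  · exact absurd h2 (by simp)
  · exact absurd h2 (by simp)
  · obtain rfl : k = k' := by
      have h2' := h2; simpa [Option.some.injEq] using h2'
    exact h1.symm

lemma binv_init : BInv (initConfig n L) := by
  have hroots : (initConfig n L).stack ++ (initConfig n L).buffer
      = 0 :: (List.range n).map (· + 1) := rfl
  have hmem : ∀ x, x ∈ (initConfig n L).stack ++ (initConfig n L).buffer ↔
      x < n + 1 := by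
    intro x
    rw [hroots]
    simp only [List.mem_cons, List.mem_map, List.mem_range]
    constructor
    · rintro (rfl | ⟨j, hj, rfl⟩)
      · exact Nat.succ_pos n
      · omega
    · intro hx
      rcases Nat.eq_zero_or_pos x with rfl | hp
      · exact Or.inl rfl
      · exact Or.inr ⟨x - 1, by omega, by omega⟩
  have hne : ∀ i < n + 1, ((initConfig n L).content i).Nonempty := by
    intro i hi
    rcases Nat.eq_zero_or_pos i with rfl | hp
    · exact ⟨none, Or.inl ⟨rfl, rfl⟩⟩
    · exact ⟨some ⟨i - 1, by omega⟩, Or.inr ⟨⟨i - 1, by omega⟩, by simp; omega, rfl⟩⟩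
  have hproj : ∀ x, (initConfig n L).proj x = (initConfig n L).content x := by
    intro x
    ext v
    constructor
    · rintro ⟨y, hy, hv⟩
      obtain rfl := reach_empty (L := L) hy
      exact hv
    · intro hv; exact ⟨x, .refl, hv⟩
  refine ⟨?_, ?_, ?_, ?_, ?_, ?_, ?_⟩
  · rw [hroots]
    refine List.nodup_cons.mpr ⟨?_, ?_⟩
    · simp
    · exact (List.nodup_range : (List.range n).Nodup).map (fun a b => by omega)
  · intro x hx
    simpa [initConfig, Finset.mem_range] using (hmem x).mp hx
  · intro a l b hab
    exact absurd hab (Set.notMem_empty _)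
  · intro α hα
    exact hne α (by simpa [initConfig, Finset.mem_range] using hα)
  · intro α hα
    exact ⟨α, (hmem α).mpr (by simpa [initConfig, Finset.mem_range] using hα), .refl⟩
  · intro r1 _ r2 _ hne12 v hv1 hv2
    rw [hproj] at hv1 hv2
    exact hne12 (init_content_inter hv1 hv2)
  · intro α1 hα1 α2 hα2 heq
    have h1 : α1 < n + 1 := by simpa [initConfig, Finset.mem_range] using hα1
    obtain ⟨v, hv⟩ := hne α1 h1
    exact init_content_inter hv (heq ▸ hv)

end NonDupProof4
/-- **(Non-duplication invariant)** In every reachable configuration, the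
content map `φ` is injective on the bubble set: no two distinct bubbles have
equal content sets. -/
theorem nonDuplication_invariant (n : ℕ) (L : Type*) [Fintype L] (conj : L)
    (c : Config n L) (hreach : Reachable conj c) :
    ∀ α1 ∈ c.bubbles, ∀ α2 ∈ c.bubbles,
      c.content α1 = c.content α2 → α1 = α2 := by
  have h : BInv c := by
    induction hreach with
    | refl => exact binv_init
    | tail _ hstep ih => exact ih.step hstep
  exact h.inj
end

section
/- (Terminal tree property) For every sentence W = w_1, …, w_n and every valid transition sequence for W with terminal configuration (σ_m, β_m, B_m, φ_m, A_m, O_m), the arc set A_m forms a directed tree on B_m rooted at the unique bubble with content {RT}: the root bubble has no incoming arc in A_m, every other bubble in B_m has exactly one incoming arc in A_m, every bubble in B_m is reachable from the root via arcs in A_m, and A_m contains no directed cycle. -/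
/-! ### Auxiliary development -/

section Aux

lemma arcRel_insert_iff {L : Type*} (arcs : Set (ℕ × L × ℕ)) (p : ℕ) (l : L) (t : ℕ)
    (x y : ℕ) :
    ArcRel (insert (p, l, t) arcs) x y ↔ (x = p ∧ y = t) ∨ ArcRel arcs x y := by
  constructor
  · rintro ⟨l', h⟩
    rcases Set.mem_insert_iff.1 h with h | h
    · exact Or.inl ⟨congrArg Prod.fst h, congrArg (fun q => q.2.2) h⟩
    · exact Or.inr ⟨l', h⟩
  · rintro (⟨rfl, rfl⟩ | ⟨l', h⟩)
    · exact ⟨l, Set.mem_insert _ _⟩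
    · exact ⟨l', Set.mem_insert_iff.2 (Or.inr h)⟩

lemma arcRel_mono {L : Type*} {arcs arcs' : Set (ℕ × L × ℕ)} (hs : arcs ⊆ arcs')
    {x y : ℕ} (h : Relation.ReflTransGen (ArcRel arcs) x y) :
    Relation.ReflTransGen (ArcRel arcs') x y :=
  Relation.ReflTransGen.mono (fun a b (hab : ArcRel arcs a b) => (hab.imp fun l hl => hs hl : ArcRel arcs' a b)) x y h

lemma no_cycle_extend {R R' : ℕ → ℕ → Prop} (p : ℕ)
    (hRR' : ∀ x y, R x y → R' x y)
    (hsub : ∀ x y, R' x y → R x y ∨ x = p)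
    (hnoin : ∀ x, ¬ R' x p)
    (hR : ¬ ∃ b, Relation.TransGen R b b) :
    ¬ ∃ b, Relation.TransGen R' b b := by
  have key : ∀ a b, Relation.ReflTransGen R' a b →
      Relation.ReflTransGen R a b ∨ Relation.ReflTransGen R' a p := by
    intro a b h
    induction h using Relation.ReflTransGen.head_induction_on with
    | refl => exact Or.inl Relation.ReflTransGen.refl
    | head hac hcb ih =>
      rcases hsub _ _ hac with h1 | rfl
      · rcases ih with h2 | h2
        · exact Or.inl (Relation.ReflTransGen.head h1 h2)
        · exact Or.inr (Relation.ReflTransGen.head hac h2)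
      · exact Or.inr Relation.ReflTransGen.refl
  rintro ⟨b, hb⟩
  obtain ⟨c, hbc, hcb⟩ := Relation.TransGen.head'_iff.1 hb
  rcases key c b hcb with h | h
  · rcases hsub _ _ hbc with h1 | rfl
    · exact hR ⟨b, Relation.TransGen.head' h1 h⟩
    · rcases Relation.ReflTransGen.cases_tail h with h2 | ⟨x, _, hxp⟩
      · exact hnoin _ (h2.symm ▸ hbc)
      · exact hnoin _ (hRR' _ _ hxp)
  · rcases Relation.ReflTransGen.cases_tail h with h2 | ⟨x, _, hxp⟩
    · exact hnoin _ (h2.symm ▸ hbc)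
    · exact hnoin _ hxp

lemma exists_mem_ne {α : Type*} {s : Set α} {x : α} (hne : s.Nonempty) (hs : s ≠ {x}) :
    ∃ y ∈ s, y ≠ x := by
  by_contra h
  push_neg at h
  have hsub : s ⊆ {x} := fun y hy => h y hy
  rcases Set.subset_singleton_iff_eq.1 hsub with h0 | h0
  · exact (Set.nonempty_iff_ne_empty.1 hne) h0
  · exact hs h0

lemma uniq_single {L : Type*} {arcs : Set (ℕ × L × ℕ)} {p t : ℕ} {l : L}
    (hno : ∀ q l', (q, l', t) ∉ arcs) :
    ∃! pl : ℕ × L, (pl.1, pl.2, t) ∈ insert (p, l, t) arcs := by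
  refine ⟨(p, l), Set.mem_insert _ _, ?_⟩
  rintro ⟨q, l'⟩ hq
  rcases Set.mem_insert_iff.1 hq with h | h
  · simp only [Prod.mk.injEq] at h
    exact Prod.ext h.1 h.2.1
  · exact absurd h (hno q l')

lemma uniq_preserved {L : Type*} {arcs : Set (ℕ × L × ℕ)} {p t b : ℕ} {l : L} (hb : b ≠ t)
    (h : ∃! pl : ℕ × L, (pl.1, pl.2, b) ∈ arcs) :
    ∃! pl : ℕ × L, (pl.1, pl.2, b) ∈ insert (p, l, t) arcs := by
  obtain ⟨pl, hpl, hu⟩ := h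
  refine ⟨pl, Set.mem_insert_iff.2 (Or.inr hpl), ?_⟩
  intro q hq
  rcases Set.mem_insert_iff.1 hq with h | h
  · exact absurd (congrArg (fun z => z.2.2) h) hb
  · exact hu q h

/-- The master invariant maintained by all transitions. -/
structure PInv {n : ℕ} {L : Type*} (c : Config n L) : Prop where
  nodup : (c.stack ++ c.buffer).Nodup
  mem_bub : ∀ b ∈ c.stack ++ c.buffer, b ∈ c.bubbles
  arc_bub : ∀ a l b, (a, l, b) ∈ c.arcs → a ∈ c.bubbles ∧ b ∈ c.bubbles
  no_in : ∀ b ∈ c.stack ++ c.buffer, ∀ p l, (p, l, b) ∉ c.arcs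
  uniq_in : ∀ b ∈ c.bubbles, b ∉ c.stack ++ c.buffer →
    ∃! pl : ℕ × L, (pl.1, pl.2, b) ∈ c.arcs
  reach : ∀ b ∈ c.bubbles, ∃ s ∈ c.stack ++ c.buffer,
    Relation.ReflTransGen (ArcRel c.arcs) s b
  acyc : ¬ ∃ b, Relation.TransGen (ArcRel c.arcs) b b
  zero_bub : 0 ∈ c.bubbles
  zero_cont : c.content 0 = {(none : BNode n)}
  root_uniq : ∀ b ∈ c.bubbles, c.content b = {(none : BNode n)} → b = 0
  cont_ne : ∀ b ∈ c.bubbles, (c.content b).Nonempty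
  zero_open : 0 ∉ c.openB

lemma inv_init (n : ℕ) (L : Type*) : PInv (initConfig n L) := by
  have hlist : (initConfig n L).stack ++ (initConfig n L).buffer
      = 0 :: (List.range n).map (· + 1) := rfl
  have hmem : ∀ b : ℕ, b ∈ (initConfig n L).stack ++ (initConfig n L).buffer ↔ b < n + 1 := by
    intro b
    rw [hlist]
    simp only [List.mem_cons, List.mem_map, List.mem_range]
    constructor
    · rintro (rfl | ⟨a, _, rfl⟩) <;> omega
    · intro hb
      rcases Nat.eq_zero_or_pos b with rfl | _
      · exact Or.inl rfl
      · exact Or.inr ⟨b - 1, by omega, by omega⟩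
  refine ⟨?_, ?_, ?_, ?_, ?_, ?_, ?_, ?_, ?_, ?_, ?_, ?_⟩
  · rw [hlist]
    refine List.nodup_cons.2 ⟨?_, ?_⟩
    · simp only [List.mem_map, List.mem_range]
      omega
    · exact (List.nodup_range (n := n)).map (fun a b h => by omega)
  · intro b hb
    simp only [initConfig, Finset.mem_range]
    exact (hmem b).1 hb
  · intro a l b h
    exact absurd h (Set.notMem_empty _)
  · intro b _ p l h
    exact absurd h (Set.notMem_empty _)
  · intro b hb hnb
    simp only [initConfig, Finset.mem_range] at hb
    exact absurd ((hmem b).2 hb) hnb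
  · intro b hb
    simp only [initConfig, Finset.mem_range] at hb
    exact ⟨b, (hmem b).2 hb, Relation.ReflTransGen.refl⟩
  · rintro ⟨b, hb⟩
    rcases Relation.TransGen.head'_iff.1 hb with ⟨c, ⟨l, hc⟩, _⟩
    exact absurd hc (Set.notMem_empty _)
  · simp [initConfig]
  · ext v
    simp only [initConfig, Set.mem_setOf_eq, Set.mem_singleton_iff]
    constructor
    · rintro (⟨_, rfl⟩ | ⟨k, hk, _⟩)
      · rfl
      · exact absurd hk.symm (Nat.succ_ne_zero _)
    · rintro rfl
      tauto
  · intro b hb hcb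
    by_contra hb0
    simp only [initConfig, Finset.mem_range] at hb
    obtain ⟨j, hj, rfl⟩ : ∃ j : ℕ, j < n ∧ b = j + 1 := ⟨b - 1, by omega, by omega⟩
    have : (some ⟨j, hj⟩ : BNode n) ∈ (initConfig n L).content (j + 1) := by
      simp only [initConfig, Set.mem_setOf_eq]
      exact Or.inr ⟨⟨j, hj⟩, rfl, rfl⟩
    rw [hcb] at this
    simp at this
  · intro b hb
    simp only [initConfig, Finset.mem_range] at hb
    rcases Nat.eq_zero_or_pos b with rfl | hpos
    · exact ⟨none, Or.inl ⟨rfl, rfl⟩⟩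
    · obtain ⟨j, hj, rfl⟩ : ∃ j : ℕ, j < n ∧ b = j + 1 := ⟨b - 1, by omega, by omega⟩
      exact ⟨some ⟨j, hj⟩, Or.inr ⟨⟨j, hj⟩, rfl, rfl⟩⟩
  · simp [initConfig]
lemma inv_step {n : ℕ} {L : Type*} {conj : L} {c c' : Config n L}
    (h : Step conj c c') (inv : PInv c) : PInv c' := by
  cases h with
  | shift b1 β hbuf =>
    have hperm : ((b1 :: c.stack) ++ β).Perm (c.stack ++ c.buffer) := by
      rw [hbuf]; exact List.perm_middle.symm
    exact {
      nodup := hperm.nodup_iff.2 inv.nodup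
      mem_bub := fun b hb => inv.mem_bub b (hperm.mem_iff.1 hb)
      arc_bub := inv.arc_bub
      no_in := fun b hb => inv.no_in b (hperm.mem_iff.1 hb)
      uniq_in := fun b hb hnb => inv.uniq_in b hb (fun hx => hnb (hperm.mem_iff.2 hx))
      reach := fun b hb => by
        obtain ⟨s, hs, hr⟩ := inv.reach b hb
        exact ⟨s, hperm.mem_iff.2 hs, hr⟩
      acyc := inv.acyc
      zero_bub := inv.zero_bub
      zero_cont := inv.zero_cont
      root_uniq := inv.root_uniq
      cont_ne := inv.cont_ne
      zero_open := inv.zero_open }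
  | bubbleClose s1 σ hstk hs1 =>
    have hperm : (σ ++ s1 :: c.buffer).Perm (c.stack ++ c.buffer) := by
      rw [hstk]; exact List.perm_middle
    exact {
      nodup := hperm.nodup_iff.2 inv.nodup
      mem_bub := fun b hb => inv.mem_bub b (hperm.mem_iff.1 hb)
      arc_bub := inv.arc_bub
      no_in := fun b hb => inv.no_in b (hperm.mem_iff.1 hb)
      uniq_in := fun b hb hnb => inv.uniq_in b hb (fun hx => hnb (hperm.mem_iff.2 hx))
      reach := fun b hb => by
        obtain ⟨s, hs, hr⟩ := inv.reach b hb
        exact ⟨s, hperm.mem_iff.2 hs, hr⟩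
      acyc := inv.acyc
      zero_bub := inv.zero_bub
      zero_cont := inv.zero_cont
      root_uniq := inv.root_uniq
      cont_ne := inv.cont_ne
      zero_open := fun h => inv.zero_open (Finset.mem_of_mem_erase h) }
  | leftArc lbl s1 σ b1 β hstk hbuf hs1o hb1o hroot =>
    have hold : c.stack ++ c.buffer = s1 :: (σ ++ c.buffer) := by rw [hstk]; rfl
    have hnd := inv.nodup
    rw [hold] at hnd
    have hs1new : s1 ∉ σ ++ c.buffer := (List.nodup_cons.1 hnd).1
    have hndnew : (σ ++ c.buffer).Nodup := (List.nodup_cons.1 hnd).2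
    have hb1mem : b1 ∈ σ ++ c.buffer := by rw [hbuf]; simp
    have hb1old : b1 ∈ c.stack ++ c.buffer := by
      rw [hold]; exact List.mem_cons_of_mem _ hb1mem
    have hs1old : s1 ∈ c.stack ++ c.buffer := by
      rw [hold]; exact List.mem_cons_self
    have hb1s1 : b1 ≠ s1 := fun h => hs1new (h ▸ hb1mem)
    have harcs : c.arcs ⊆ insert (b1, lbl, s1) c.arcs := Set.subset_insert _ _
    refine {
      nodup := hndnew
      mem_bub := fun b hb => inv.mem_bub b (by rw [hold]; exact List.mem_cons_of_mem _ hb)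
      arc_bub := ?_
      no_in := ?_
      uniq_in := ?_
      reach := ?_
      acyc := ?_
      zero_bub := inv.zero_bub
      zero_cont := inv.zero_cont
      root_uniq := inv.root_uniq
      cont_ne := inv.cont_ne
      zero_open := inv.zero_open }
    · intro a l b h
      rcases Set.mem_insert_iff.1 h with h | h
      · obtain ⟨rfl, -, rfl⟩ : a = b1 ∧ l = lbl ∧ b = s1 := by
          simpa [Prod.ext_iff] using h
        exact ⟨inv.mem_bub _ hb1old, inv.mem_bub _ hs1old⟩
      · exact inv.arc_bub a l b h
    · intro b hb p l h
      have hbs1 : b ≠ s1 := fun hh => hs1new (hh ▸ hb)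
      rcases Set.mem_insert_iff.1 h with h | h
      · exact hbs1 (congrArg (fun z => z.2.2) h)
      · exact inv.no_in b (by rw [hold]; exact List.mem_cons_of_mem _ hb) p l h
    · intro b hb hnb
      by_cases hbs1 : b = s1
      · subst hbs1
        exact uniq_single (fun q l' => inv.no_in b hs1old q l')
      · refine uniq_preserved hbs1 (inv.uniq_in b hb ?_)
        rw [hold]
        simp only [List.mem_cons]
        rintro (h | h)
        · exact hbs1 h
        · exact hnb h
    · intro b hb
      obtain ⟨s, hs, hr⟩ := inv.reach b hb
      have hr' := arcRel_mono harcs hr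
      rw [hold] at hs
      rcases List.mem_cons.1 hs with rfl | hs
      · exact ⟨b1, hb1mem, Relation.ReflTransGen.head ⟨lbl, Set.mem_insert _ _⟩ hr'⟩
      · exact ⟨s, hs, hr'⟩
    · refine no_cycle_extend b1 (fun x y hxy => hxy.imp (fun l hl => harcs hl)) ?_ ?_ inv.acyc
      · intro x y h
        rcases (arcRel_insert_iff _ _ _ _ _ _).1 h with ⟨rfl, -⟩ | h
        · exact Or.inr rfl
        · exact Or.inl h
      · intro x h
        rcases (arcRel_insert_iff _ _ _ _ _ _).1 h with ⟨-, h2⟩ | h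
        · exact hb1s1 h2
        · obtain ⟨l, hl⟩ := h
          exact inv.no_in b1 hb1old x l hl
  | rightArc lbl s1 s2 σ hstk hs1o hs2o =>
    have hold : c.stack ++ c.buffer = s1 :: (s2 :: (σ ++ c.buffer)) := by rw [hstk]; rfl
    have hnd := inv.nodup
    rw [hold] at hnd
    have h1 := List.nodup_cons.1 hnd
    have hs1new : s1 ∉ s2 :: (σ ++ c.buffer) := h1.1
    have hndnew : (s2 :: (σ ++ c.buffer)).Nodup := h1.2
    have hs2mem : s2 ∈ s2 :: (σ ++ c.buffer) := List.mem_cons_self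
    have hs1old : s1 ∈ c.stack ++ c.buffer := by rw [hold]; exact List.mem_cons_self
    have hs2old : s2 ∈ c.stack ++ c.buffer := by
      rw [hold]; exact List.mem_cons_of_mem _ hs2mem
    have hs2s1 : s2 ≠ s1 := fun h => hs1new (h ▸ hs2mem)
    have harcs : c.arcs ⊆ insert (s2, lbl, s1) c.arcs := Set.subset_insert _ _
    refine {
      nodup := hndnew
      mem_bub := fun b hb => inv.mem_bub b (by rw [hold]; exact List.mem_cons_of_mem _ hb)
      arc_bub := ?_
      no_in := ?_
      uniq_in := ?_
      reach := ?_
      acyc := ?_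
      zero_bub := inv.zero_bub
      zero_cont := inv.zero_cont
      root_uniq := inv.root_uniq
      cont_ne := inv.cont_ne
      zero_open := inv.zero_open }
    · intro a l b h
      rcases Set.mem_insert_iff.1 h with h | h
      · obtain ⟨rfl, -, rfl⟩ : a = s2 ∧ l = lbl ∧ b = s1 := by
          simpa [Prod.ext_iff] using h
        exact ⟨inv.mem_bub _ hs2old, inv.mem_bub _ hs1old⟩
      · exact inv.arc_bub a l b h
    · intro b hb p l h
      have hbs1 : b ≠ s1 := fun hh => hs1new (hh ▸ hb)
      rcases Set.mem_insert_iff.1 h with h | h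
      · exact hbs1 (congrArg (fun z => z.2.2) h)
      · exact inv.no_in b (by rw [hold]; exact List.mem_cons_of_mem _ hb) p l h
    · intro b hb hnb
      by_cases hbs1 : b = s1
      · subst hbs1
        exact uniq_single (fun q l' => inv.no_in b hs1old q l')
      · refine uniq_preserved hbs1 (inv.uniq_in b hb ?_)
        rw [hold]
        simp only [List.mem_cons]
        rintro (h | h)
        · exact hbs1 h
        · exact hnb (List.mem_cons.2 h)
    · intro b hb
      obtain ⟨s, hs, hr⟩ := inv.reach b hb
      have hr' := arcRel_mono harcs hr
      rw [hold] at hs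
      rcases List.mem_cons.1 hs with rfl | hs
      · exact ⟨s2, hs2mem, Relation.ReflTransGen.head ⟨lbl, Set.mem_insert _ _⟩ hr'⟩
      · exact ⟨s, hs, hr'⟩
    · refine no_cycle_extend s2 (fun x y hxy => hxy.imp (fun l hl => harcs hl)) ?_ ?_ inv.acyc
      · intro x y h
        rcases (arcRel_insert_iff _ _ _ _ _ _).1 h with ⟨rfl, -⟩ | h
        · exact Or.inr rfl
        · exact Or.inl h
      · intro x h
        rcases (arcRel_insert_iff _ _ _ _ _ _).1 h with ⟨-, h2⟩ | h
        · exact hs2s1 h2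
        · obtain ⟨l, hl⟩ := h
          exact inv.no_in s2 hs2old x l hl
  | bubbleAttach lbl s1 s2 σ hstk hs1o hs2o =>
    have hold : c.stack ++ c.buffer = s1 :: (s2 :: (σ ++ c.buffer)) := by rw [hstk]; rfl
    have hnd := inv.nodup
    rw [hold] at hnd
    have h1 := List.nodup_cons.1 hnd
    have hs1new : s1 ∉ s2 :: (σ ++ c.buffer) := h1.1
    have hndnew : (s2 :: (σ ++ c.buffer)).Nodup := h1.2
    have hs2mem : s2 ∈ s2 :: (σ ++ c.buffer) := List.mem_cons_self
    have hs1old : s1 ∈ c.stack ++ c.buffer := by rw [hold]; exact List.mem_cons_self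
    have hs2old : s2 ∈ c.stack ++ c.buffer := by
      rw [hold]; exact List.mem_cons_of_mem _ hs2mem
    have hs2s1 : s2 ≠ s1 := fun h => hs1new (h ▸ hs2mem)
    have hs2b : s2 ∈ c.bubbles := inv.mem_bub _ hs2old
    have h0s2 : (0 : ℕ) ≠ s2 := fun h => inv.zero_open (h ▸ hs2o)
    have harcs : c.arcs ⊆ insert (s2, lbl, s1) c.arcs := Set.subset_insert _ _
    refine {
      nodup := hndnew
      mem_bub := fun b hb => inv.mem_bub b (by rw [hold]; exact List.mem_cons_of_mem _ hb)
      arc_bub := ?_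
      no_in := ?_
      uniq_in := ?_
      reach := ?_
      acyc := ?_
      zero_bub := inv.zero_bub
      zero_cont := ?_
      root_uniq := ?_
      cont_ne := ?_
      zero_open := inv.zero_open }
    · intro a l b h
      rcases Set.mem_insert_iff.1 h with h | h
      · obtain ⟨rfl, -, rfl⟩ : a = s2 ∧ l = lbl ∧ b = s1 := by
          simpa [Prod.ext_iff] using h
        exact ⟨inv.mem_bub _ hs2old, inv.mem_bub _ hs1old⟩
      · exact inv.arc_bub a l b h
    · intro b hb p l h
      have hbs1 : b ≠ s1 := fun hh => hs1new (hh ▸ hb)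
      rcases Set.mem_insert_iff.1 h with h | h
      · exact hbs1 (congrArg (fun z => z.2.2) h)
      · exact inv.no_in b (by rw [hold]; exact List.mem_cons_of_mem _ hb) p l h
    · intro b hb hnb
      by_cases hbs1 : b = s1
      · subst hbs1
        exact uniq_single (fun q l' => inv.no_in b hs1old q l')
      · refine uniq_preserved hbs1 (inv.uniq_in b hb ?_)
        rw [hold]
        simp only [List.mem_cons]
        rintro (h | h)
        · exact hbs1 h
        · exact hnb (List.mem_cons.2 h)
    · intro b hb
      obtain ⟨s, hs, hr⟩ := inv.reach b hb
      have hr' := arcRel_mono harcs hr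
      rw [hold] at hs
      rcases List.mem_cons.1 hs with rfl | hs
      · exact ⟨s2, hs2mem, Relation.ReflTransGen.head ⟨lbl, Set.mem_insert _ _⟩ hr'⟩
      · exact ⟨s, hs, hr'⟩
    · refine no_cycle_extend s2 (fun x y hxy => hxy.imp (fun l hl => harcs hl)) ?_ ?_ inv.acyc
      · intro x y h
        rcases (arcRel_insert_iff _ _ _ _ _ _).1 h with ⟨rfl, -⟩ | h
        · exact Or.inr rfl
        · exact Or.inl h
      · intro x h
        rcases (arcRel_insert_iff _ _ _ _ _ _).1 h with ⟨-, h2⟩ | h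
        · exact hs2s1 h2
        · obtain ⟨l, hl⟩ := h
          exact inv.no_in s2 hs2old x l hl
    · show Function.update c.content s2 _ 0 = _
      rw [Function.update_of_ne h0s2]
      exact inv.zero_cont
    · intro b hb hcb
      dsimp only at hcb
      by_cases hbs2 : b = s2
      · subst hbs2
        rw [Function.update_self] at hcb
        have hsub : c.content b ⊆ {(none : BNode n)} := by
          rw [← hcb]; exact Set.subset_union_left
        rcases Set.subset_singleton_iff_eq.1 hsub with h0 | h0
        · exact absurd h0 (Set.nonempty_iff_ne_empty.1 (inv.cont_ne b hs2b))
        · exact absurd (inv.root_uniq b hs2b h0) (Ne.symm h0s2)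
      · rw [Function.update_of_ne hbs2] at hcb
        exact inv.root_uniq b hb hcb
    · intro b hb
      dsimp only
      by_cases hbs2 : b = s2
      · subst hbs2
        rw [Function.update_self]
        exact (inv.cont_ne b hs2b).mono Set.subset_union_left
      · rw [Function.update_of_ne hbs2]
        exact inv.cont_ne b hb
  | bubbleOpen lbl s1 s2 σ α hstk hs1o hs2o hroot hfresh =>
    have hold : c.stack ++ c.buffer = s1 :: (s2 :: (σ ++ c.buffer)) := by rw [hstk]; rfl
    have hnd := inv.nodup
    rw [hold] at hnd
    have h1 := List.nodup_cons.1 hnd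
    have h2 := List.nodup_cons.1 h1.2
    have hs2mem : s2 ∈ s2 :: (σ ++ c.buffer) := List.mem_cons_self
    have hs1old : s1 ∈ c.stack ++ c.buffer := by rw [hold]; exact List.mem_cons_self
    have hs2old : s2 ∈ c.stack ++ c.buffer := by
      rw [hold]; exact List.mem_cons_of_mem _ hs2mem
    have hs1b : s1 ∈ c.bubbles := inv.mem_bub _ hs1old
    have hs2b : s2 ∈ c.bubbles := inv.mem_bub _ hs2old
    have has1 : α ≠ s1 := fun h => hfresh (h ▸ hs1b)
    have has2 : α ≠ s2 := fun h => hfresh (h ▸ hs2b)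
    have ha0 : α ≠ 0 := fun h => hfresh (h ▸ inv.zero_bub)
    have hs12 : s1 ≠ s2 := fun h => h1.1 (h ▸ hs2mem)
    have hrest_bub : ∀ b ∈ σ ++ c.buffer, b ∈ c.bubbles := fun b hb =>
      inv.mem_bub b (by
        rw [hold]; exact List.mem_cons_of_mem _ (List.mem_cons_of_mem _ hb))
    have hanotin : α ∉ σ ++ c.buffer := fun h => hfresh (hrest_bub α h)
    have harcs : c.arcs ⊆ insert (α, conj, s2) (insert (α, lbl, s1) c.arcs) :=
      (Set.subset_insert _ _).trans (Set.subset_insert _ _)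
    have harc1 : (α, lbl, s1) ∈ insert (α, conj, s2) (insert (α, lbl, s1) c.arcs) :=
      Set.mem_insert_iff.2 (Or.inr (Set.mem_insert _ _))
    have harc2 : (α, conj, s2) ∈ insert (α, conj, s2) (insert (α, lbl, s1) c.arcs) :=
      Set.mem_insert _ _
    have hmemA' : ∀ q l t, (q, l, t) ∈ insert (α, conj, s2) (insert (α, lbl, s1) c.arcs) →
        (q = α ∧ t = s2) ∨ (q = α ∧ t = s1) ∨ (q, l, t) ∈ c.arcs := by
      intro q l t h
      rcases Set.mem_insert_iff.1 h with h | h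
      · exact Or.inl ⟨congrArg Prod.fst h, congrArg (fun z => z.2.2) h⟩
      rcases Set.mem_insert_iff.1 h with h | h
      · exact Or.inr (Or.inl ⟨congrArg Prod.fst h, congrArg (fun z => z.2.2) h⟩)
      · exact Or.inr (Or.inr h)
    refine {
      nodup := List.nodup_cons.2 ⟨hanotin, h2.2⟩
      mem_bub := ?_
      arc_bub := ?_
      no_in := ?_
      uniq_in := ?_
      reach := ?_
      acyc := ?_
      zero_bub := Finset.mem_insert.2 (Or.inr inv.zero_bub)
      zero_cont := ?_
      root_uniq := ?_
      cont_ne := ?_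
      zero_open := fun h => by
        rcases Finset.mem_insert.1 h with h | h
        · exact ha0 h.symm
        · exact inv.zero_open h }
    · intro b hb
      rcases List.mem_cons.1 hb with rfl | hb
      · exact Finset.mem_insert_self _ _
      · exact Finset.mem_insert.2 (Or.inr (hrest_bub b hb))
    · intro a l b h
      rcases hmemA' a l b h with ⟨rfl, rfl⟩ | ⟨rfl, rfl⟩ | h
      · exact ⟨Finset.mem_insert_self _ _, Finset.mem_insert.2 (Or.inr hs2b)⟩
      · exact ⟨Finset.mem_insert_self _ _, Finset.mem_insert.2 (Or.inr hs1b)⟩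
      · obtain ⟨ha, hb'⟩ := inv.arc_bub a l b h
        exact ⟨Finset.mem_insert.2 (Or.inr ha), Finset.mem_insert.2 (Or.inr hb')⟩
    · intro b hb p l h
      rcases List.mem_cons.1 hb with rfl | hb
      · rcases hmemA' p l b h with ⟨-, h2'⟩ | ⟨-, h2'⟩ | h'
        · exact has2 h2'
        · exact has1 h2'
        · exact hfresh ((inv.arc_bub p l b h').2)
      · have hbs2 : b ≠ s2 := fun hh => h2.1 (hh ▸ hb)
        have hbs1 : b ≠ s1 := fun hh => h1.1 (hh ▸ List.mem_cons_of_mem _ hb)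
        rcases hmemA' p l b h with ⟨-, h2'⟩ | ⟨-, h2'⟩ | h'
        · exact hbs2 h2'
        · exact hbs1 h2'
        · exact inv.no_in b (by
            rw [hold]
            exact List.mem_cons_of_mem _ (List.mem_cons_of_mem _ hb)) p l h'
    · intro b hb hnb
      have hba : b ≠ α := fun hh => hnb (hh ▸ List.mem_cons_self)
      have hb' : b ∈ c.bubbles := by
        rcases Finset.mem_insert.1 hb with h | h
        · exact absurd h hba
        · exact h
      by_cases hb1 : b = s1
      · subst hb1
        refine ⟨(α, lbl), harc1, ?_⟩
        rintro ⟨q, l'⟩ hq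
        rcases Set.mem_insert_iff.1 hq with h | h
        · exact absurd (congrArg (fun z => z.2.2) h) hs12
        rcases Set.mem_insert_iff.1 h with h | h
        · simp only [Prod.mk.injEq] at h
          exact Prod.ext h.1 h.2.1
        · exact absurd h (inv.no_in b hs1old q l')
      by_cases hb2 : b = s2
      · subst hb2
        refine ⟨(α, conj), harc2, ?_⟩
        rintro ⟨q, l'⟩ hq
        rcases Set.mem_insert_iff.1 hq with h | h
        · simp only [Prod.mk.injEq] at h
          exact Prod.ext h.1 h.2.1
        rcases Set.mem_insert_iff.1 h with h | h
        · exact absurd (congrArg (fun z => z.2.2) h) (Ne.symm hs12)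
        · exact absurd h (inv.no_in b hs2old q l')
      · have hnold : b ∉ c.stack ++ c.buffer := by
          rw [hold]
          simp only [List.mem_cons]
          rintro (h | h | h)
          · exact hb1 h
          · exact hb2 h
          · exact hnb (List.mem_cons_of_mem _ h)
        exact uniq_preserved hb2 (uniq_preserved hb1 (inv.uniq_in b hb' hnold))
    · intro b hb
      rcases Finset.mem_insert.1 hb with rfl | hb'
      · exact ⟨b, List.mem_cons_self, Relation.ReflTransGen.refl⟩
      · obtain ⟨s, hs, hr⟩ := inv.reach b hb'
        have hr' := arcRel_mono harcs hr
        rw [hold] at hs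
        rcases List.mem_cons.1 hs with rfl | hs
        · exact ⟨α, List.mem_cons_self, Relation.ReflTransGen.head ⟨lbl, harc1⟩ hr'⟩
        rcases List.mem_cons.1 hs with rfl | hs
        · exact ⟨α, List.mem_cons_self, Relation.ReflTransGen.head ⟨conj, harc2⟩ hr'⟩
        · exact ⟨s, List.mem_cons_of_mem _ hs, hr'⟩
    · refine no_cycle_extend α (fun x y hxy => hxy.imp (fun l hl => harcs hl)) ?_ ?_ inv.acyc
      · rintro x y ⟨l, hl⟩
        rcases hmemA' x l y hl with ⟨rfl, -⟩ | ⟨rfl, -⟩ | h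
        · exact Or.inr rfl
        · exact Or.inr rfl
        · exact Or.inl ⟨l, h⟩
      · rintro x ⟨l, hl⟩
        rcases hmemA' x l α hl with ⟨-, h2'⟩ | ⟨-, h2'⟩ | h'
        · exact has2 h2'
        · exact has1 h2'
        · exact hfresh ((inv.arc_bub x l α h').2)
    · show Function.update c.content α _ 0 = _
      rw [Function.update_of_ne (Ne.symm ha0)]
      exact inv.zero_cont
    · intro b hb hcb
      dsimp only at hcb
      rcases Finset.mem_insert.1 hb with rfl | hb'
      · rw [Function.update_self] at hcb
        obtain ⟨u, hu, hune⟩ := exists_mem_ne (inv.cont_ne s2 hs2b) hroot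
        have hmem : u ∈ c.proj s2 ∪ c.proj s1 :=
          Set.mem_union_left _ ⟨s2, Relation.ReflTransGen.refl, hu⟩
        rw [hcb] at hmem
        exact absurd hmem hune
      · have hba : b ≠ α := fun hh => hfresh (hh ▸ hb')
        rw [Function.update_of_ne hba] at hcb
        exact inv.root_uniq b hb' hcb
    · intro b hb
      dsimp only
      rcases Finset.mem_insert.1 hb with rfl | hb'
      · rw [Function.update_self]
        obtain ⟨u, hu⟩ := inv.cont_ne s2 hs2b
        exact ⟨u, Set.mem_union_left _ ⟨s2, Relation.ReflTransGen.refl, hu⟩⟩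
      · have hba : b ≠ α := fun hh => hfresh (hh ▸ hb')
        rw [Function.update_of_ne hba]
        exact inv.cont_ne b hb'

lemma inv_reach {n : ℕ} {L : Type*} {conj : L} {c : Config n L}
    (h : Reachable conj c) : PInv c := by
  induction h with
  | refl => exact inv_init n L
  | tail _ hstep ih => exact inv_step hstep ih

end Aux

/-- **(Terminal tree property)** For every valid transition sequence, the final
arc set forms a directed tree on the final bubble set rooted at the unique
bubble with content `{RT}`: the root has no incoming arc, every other bubble has
exactly one incoming arc, every bubble is reachable from the root, and there is
no directed cycle. -/
theorem terminal_tree_property (n : ℕ) (L : Type*) [Fintype L] (conj : L)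
    (c : Config n L) (hreach : Reachable conj c) (hterm : Terminal c) :
    (∀ a l b, (a, l, b) ∈ c.arcs → a ∈ c.bubbles ∧ b ∈ c.bubbles) ∧
    ∃ r ∈ c.bubbles, c.content r = {(none : BNode n)} ∧
      (∀ r' ∈ c.bubbles, c.content r' = {(none : BNode n)} → r' = r) ∧
      (¬ ∃ p l, (p, l, r) ∈ c.arcs) ∧
      (∀ b ∈ c.bubbles, b ≠ r → ∃! pl : ℕ × L, (pl.1, pl.2, b) ∈ c.arcs) ∧
      (∀ b ∈ c.bubbles, Relation.ReflTransGen (ArcRel c.arcs) r b) ∧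
      (¬ ∃ b, Relation.TransGen (ArcRel c.arcs) b b) := by
  obtain ⟨hbuf, r, hstk, hcont⟩ := hterm
  have inv := inv_reach hreach
  have hrl : r ∈ c.stack ++ c.buffer := by rw [hstk, hbuf]; simp
  refine ⟨fun a l b h => inv.arc_bub a l b h, r, inv.mem_bub r hrl, hcont, ?_, ?_, ?_, ?_,
    inv.acyc⟩
  · intro r' hr' hc'
    rw [inv.root_uniq r' hr' hc', inv.root_uniq r (inv.mem_bub r hrl) hcont]
  · rintro ⟨p, l, hp⟩
    exact inv.no_in r hrl p l hp
  · intro b hb hbr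
    refine inv.uniq_in b hb ?_
    rw [hstk, hbuf]
    simpa using hbr
  · intro b hb
    obtain ⟨s, hs, hr⟩ := inv.reach b hb
    rw [hstk, hbuf] at hs
    simp only [List.mem_append, List.mem_singleton, List.not_mem_nil, or_false] at hs
    exact hs ▸ hr
end

section
/- (Root-children decomposition of projective bubble trees) Let (V, B, φ, A) be a projective well-formed bubble tree on W = w_1, …, w_n, and let r be the root bubble (so φ(r) = {RT}). Then the projections ψ(α') of the children α' of r (the bubbles α' with r → α') are pairwise disjoint, their union is {w_1, …, w_n}, and each ψ(α') is a set of consecutive words, i.e., of the form {w_x, w_{x+1}, …, w_y} for some 1 ≤ x ≤ y ≤ n. -/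
/-- **(Root-children decomposition of projective bubble trees)**
In a projective well-formed bubble tree with root bubble `r` (so `φ(r) = {RT}`),
the projections of the children of `r` are pairwise disjoint, their union is
exactly the set of words `{w_1, …, w_n}`, and each such projection is a set of
consecutive words. -/
theorem root_children_decomposition (n : ℕ) (L : Type*) [Fintype L]
    (B : Finset ℕ) (φ : ℕ → Set (BNode n)) (arcs : Set (ℕ × L × ℕ))
    (hwf : WellFormed n B φ arcs) (hproj : Projective n B φ arcs)
    (r : ℕ) (hr : r ∈ B) (hroot : φ r = {(none : BNode n)}) :
    -- pairwise disjoint projections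
    (∀ α1 α2, ArcRel arcs r α1 → ArcRel arcs r α2 → α1 ≠ α2 →
      projOf arcs φ α1 ∩ projOf arcs φ α2 = ∅) ∧
    -- the union of the children's projections is exactly the set of words
    (∀ v : BNode n,
      (∃ α', ArcRel arcs r α' ∧ v ∈ projOf arcs φ α') ↔ ∃ i : Fin n, v = some i) ∧
    -- each child's projection is a set of consecutive words
    (∀ α', ArcRel arcs r α' → ∃ x y : Fin n, x ≤ y ∧
      ∀ v : BNode n, v ∈ projOf arcs φ α' ↔
        ∃ k : Fin n, v = some k ∧ x ≤ k ∧ k ≤ y) := by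
  obtain ⟨⟨hend, r0, hr0B, hr0noin, huniq0, hr0reach⟩, hne, hnov, hnd, hlex,
    ⟨r1, hr1B, hr1φ, hr1only, hr1noin, hr1reach⟩, hcont⟩ := hwf
  obtain ⟨hcc, hcp, hcontain⟩ := hproj
  classical
  have hrmem : (none : BNode n) ∈ φ r := by rw [hroot]; rfl
  have hrr1 : r1 = r := (hr1only r hr hrmem).symm
  subst r1
  have reach_r : ∀ a, Relation.ReflTransGen (ArcRel arcs) a r → a = r := by
    intro a h
    rcases Relation.ReflTransGen.cases_tail h with h' | ⟨c, _, hc⟩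
    · exact h'.symm
    · obtain ⟨l, hl⟩ := hc
      exact absurd ⟨c, l, hl⟩ hr1noin
  have hr0r : r0 = r := reach_r r0 (hr0reach r hr)
  subst r0
  have hreachB : ∀ a β, a ∈ B → Relation.ReflTransGen (ArcRel arcs) a β → β ∈ B := by
    intro a β ha h
    induction h with
    | refl => exact ha
    | tail _ hstep ih => obtain ⟨l, hl⟩ := hstep; exact (hend _ _ _ hl).2
  have hpar : ∀ p1 l1 p2 l2 b, (p1, l1, b) ∈ arcs → (p2, l2, b) ∈ arcs → p1 = p2 := by
    intro p1 l1 p2 l2 b h1 h2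
    have hbB : b ∈ B := (hend _ _ _ h1).2
    have hbr : b ≠ r := by rintro rfl; exact hr1noin ⟨p1, l1, h1⟩
    obtain ⟨pl, _, hu⟩ := huniq0 b hbB hbr
    exact congrArg Prod.fst ((hu (p1, l1) h1).trans (hu (p2, l2) h2).symm)
  have hchild_ne : ∀ a, ArcRel arcs r a → a ≠ r := by
    rintro a ⟨l, hl⟩ rfl
    exact hr1noin ⟨_, l, hl⟩
  have hchildB : ∀ a, ArcRel arcs r a → a ∈ B := by
    rintro a ⟨l, hl⟩; exact (hend _ _ _ hl).2
  have hdesc_ne : ∀ a β, a ≠ r → Relation.ReflTransGen (ArcRel arcs) a β → β ≠ r := by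
    intro a β ha h
    rintro rfl
    exact ha (reach_r a h)
  -- unique child through which a descendant is reached
  have huc : ∀ a b, ArcRel arcs r a → ArcRel arcs r b → ∀ β,
      Relation.ReflTransGen (ArcRel arcs) a β →
      Relation.ReflTransGen (ArcRel arcs) b β → a = b := by
    intro a b ha hb β h1
    induction h1 with
    | refl =>
      intro h2
      rcases Relation.ReflTransGen.cases_tail h2 with h' | ⟨c, hbc, hca⟩
      · exact h'
      · obtain ⟨l, hl⟩ := ha
        obtain ⟨l', hl'⟩ := hca
        have hcr : c = r := hpar c l' r l a hl' hl
        subst hcr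
        exact absurd (reach_r b hbc) (hchild_ne b hb)
    | @tail c β' h1' hstep ih =>
      intro h2
      rcases Relation.ReflTransGen.cases_tail h2 with h' | ⟨c2, hbc2, hc2⟩
      · subst h'
        obtain ⟨l, hl⟩ := hstep
        obtain ⟨l', hl'⟩ := hb
        have hcr : c = r := hpar c l r l' β' hl hl'
        subst hcr
        exact absurd (reach_r a h1') (hchild_ne a ha)
      · obtain ⟨l, hl⟩ := hstep
        obtain ⟨l', hl'⟩ := hc2
        have : c = c2 := hpar c l c2 l' β' hl hl'
        exact ih (this ▸ hbc2)
  have key : ∀ α1 α2 β1 β2, ArcRel arcs r α1 → ArcRel arcs r α2 →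
      Relation.ReflTransGen (ArcRel arcs) α1 β1 →
      Relation.ReflTransGen (ArcRel arcs) α2 β2 →
      φ β1 ⊆ φ β2 → α1 = α2 := by
    intro α1 α2 β1 β2 h1 h2 hb1 hb2 hsub
    have hβ1B : β1 ∈ B := hreachB _ _ (hchildB _ h1) hb1
    have hβ2B : β2 ∈ B := hreachB _ _ (hchildB _ h2) hb2
    rcases eq_or_ne (φ β1) (φ β2) with heq | hneq
    · have : β1 = β2 := hnd β1 hβ1B β2 hβ2B heq
      subst this
      exact huc α1 α2 h1 h2 β1 hb1 hb2
    · have hss : φ β1 ⊂ φ β2 := Set.ssubset_iff_subset_ne.mpr ⟨hsub, hneq⟩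
      have : Relation.ReflTransGen (ArcRel arcs) β2 β1 := hcont β2 hβ2B β1 hβ1B hss
      exact huc α1 α2 h1 h2 β1 hb1 (hb2.trans this)
  have hnone : ∀ a, ArcRel arcs r a → (none : BNode n) ∉ projOf arcs φ a := by
    rintro a ha ⟨β, hβ, hvβ⟩
    have hβB : β ∈ B := hreachB _ _ (hchildB _ ha) hβ
    exact hdesc_ne a β (hchild_ne a ha) hβ (hr1only β hβB hvβ)
  refine ⟨?_, ?_, ?_⟩
  · intro α1 α2 h1 h2 hne12
    ext v
    simp only [Set.mem_inter_iff, Set.mem_empty_iff_false, iff_false]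
    rintro ⟨⟨β1, hb1, hv1⟩, ⟨β2, hb2, hv2⟩⟩
    have hβ1B : β1 ∈ B := hreachB _ _ (hchildB _ h1) hb1
    have hβ2B : β2 ∈ B := hreachB _ _ (hchildB _ h2) hb2
    rcases hnov β1 hβ1B β2 hβ2B with hemp | hsub | hsub
    · have : v ∈ φ β1 ∩ φ β2 := ⟨hv1, hv2⟩
      rw [hemp] at this
      exact this
    · exact hne12 (key α1 α2 β1 β2 h1 h2 hb1 hb2 hsub)
    · exact hne12 (key α2 α1 β2 β1 h2 h1 hb2 hb1 hsub).symm
  · intro v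
    constructor
    · rintro ⟨α', ha, hv⟩
      cases v with
      | none => exact absurd hv (hnone α' ha)
      | some i => exact ⟨i, rfl⟩
    · rintro ⟨i, rfl⟩
      obtain ⟨α, hαB, hφα⟩ := hlex (some i)
      have hαr : α ≠ r := by
        rintro rfl
        have h := hφα.symm.trans hroot
        simp [Set.singleton_eq_singleton_iff] at h
      rcases Relation.ReflTransGen.cases_head (hr1reach α hαB) with h' | ⟨c, hrc, hcα⟩
      · exact absurd h'.symm hαr
      · exact ⟨c, hrc, α, hcα, by rw [hφα]; rfl⟩
  · intro α' ha
    have hαB : α' ∈ B := hchildB _ ha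
    obtain ⟨v0, hv0⟩ := hne α' hαB
    have hv0ψ : v0 ∈ projOf arcs φ α' := ⟨α', Relation.ReflTransGen.refl, hv0⟩
    obtain ⟨i0, rfl⟩ : ∃ i, v0 = some i := by
      cases v0 with
      | none => exact absurd hv0ψ (hnone α' ha)
      | some i => exact ⟨i, rfl⟩
    set S : Finset (Fin n) := Finset.univ.filter (fun i : Fin n => some i ∈ projOf arcs φ α')
      with hSdef
    have hmemS : ∀ i : Fin n, i ∈ S ↔ some i ∈ projOf arcs φ α' := by
      intro i; simp [hSdef]
    have hS : S.Nonempty := ⟨i0, (hmemS i0).mpr hv0ψ⟩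
    refine ⟨S.min' hS, S.max' hS, S.min'_le _ (S.max'_mem hS), ?_⟩
    intro v
    constructor
    · intro hv
      cases v with
      | none => exact absurd hv (hnone α' ha)
      | some k =>
        have hk : k ∈ S := (hmemS k).mpr hv
        exact ⟨k, rfl, S.min'_le k hk, S.le_max' k hk⟩
    · rintro ⟨k, rfl, hxk, hky⟩
      rcases eq_or_ne k (S.min' hS) with h | hkx
      · exact (hmemS k).mp (h ▸ S.min'_mem hS)
      rcases eq_or_ne k (S.max' hS) with h | hky'
      · exact (hmemS k).mp (h ▸ S.max'_mem hS)
      exact hcp α' hαB (S.min' hS) (S.max' hS) k (lt_of_le_of_ne hxk (Ne.symm hkx))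
        (lt_of_le_of_ne hky hky')
        ((hmemS _).mp (S.min'_mem hS)) ((hmemS _).mp (S.max'_mem hS))
end

section
/- (Continuous-projections invariant) For every sentence W = w_1, …, w_n and every reachable configuration (σ, β, B, φ, A, O) of the Bubble-Hybrid transition system for W, every bubble's projection is a contiguous set of words: for every α ∈ B and all indices i < k < j, if w_i ∈ ψ(α) and w_j ∈ ψ(α) then w_k ∈ ψ(α). -/
namespace BubbleInv

open Relation

variable {n : ℕ} {L : Type*}

/-- Numeric value of a node, used for ordering: root is `0`, word `i` is `i+1`. -/
def fval {n : ℕ} : BNode n → ℕ := fun v => v.elim 0 (fun i => (i : ℕ) + 1)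

/-- Contiguity of a set of nodes (on word indices). -/
def Contig {n : ℕ} (S : Set (BNode n)) : Prop :=
  ∀ i j k : Fin n, i < k → k < j → some i ∈ S → some j ∈ S → some k ∈ S

/-- All elements of `g a` are strictly to the left of all elements of `g b`. -/
def Rel {n : ℕ} (g : ℕ → Set (BNode n)) (a b : ℕ) : Prop :=
  ∀ v ∈ g a, ∀ w ∈ g b, fval v < fval w

/-- The list of "active" bubbles: stack (bottom first) followed by the buffer. -/
def active {n : ℕ} {L : Type*} (c : Config n L) : List ℕ :=
  c.stack.reverse ++ c.buffer

/-- The main inductive invariant. -/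
structure Inv {n : ℕ} {L : Type*} (c : Config n L) : Prop where
  nodup : (active c).Nodup
  memB : ∀ a ∈ active c, a ∈ c.bubbles
  arcmem : ∀ p ∈ c.arcs, (p : ℕ × L × ℕ).1 ∈ c.bubbles ∧ p.2.2 ∈ c.bubbles
  noIn : ∀ a ∈ active c, ∀ x l, (x, l, a) ∉ c.arcs
  ord : (active c).Pairwise (Rel c.proj)
  cover : ∀ v : BNode n, ∃ a ∈ active c, v ∈ c.proj a
  contig : ∀ α ∈ c.bubbles, Contig (c.proj α)

lemma reach_eq_of_noIn {A : Set (ℕ × L × ℕ)} {b x : ℕ}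
    (hb : ∀ y l, (y, l, b) ∉ A) (h : ReflTransGen (ArcRel A) x b) : x = b := by
  rcases h.cases_tail with h | ⟨c, _, harc⟩
  · exact h.symm
  · have harc' : ∃ l, (c, l, b) ∈ A := harc
    obtain ⟨l, hl⟩ := harc'
    exact absurd hl (hb _ _)

lemma reach_union_iff {A N : Set (ℕ × L × ℕ)} {b : ℕ}
    (hb : ∀ y l, (y, l, b) ∉ A ∪ N) (hN : ∀ p ∈ N, (p : ℕ × L × ℕ).1 = b)
    {x y : ℕ} (hx : x ≠ b) :
    ReflTransGen (ArcRel (A ∪ N)) x y ↔ ReflTransGen (ArcRel A) x y := by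
  constructor
  · intro h
    revert hx
    induction h using ReflTransGen.head_induction_on with
    | refl => intro _; exact .refl
    | head h' hrest ih =>
      intro hxb
      rename_i a c
      have h'' : ∃ l, (a, l, c) ∈ A ∪ N := h'
      obtain ⟨l, hl⟩ := h''
      rcases hl with hl | hl
      · have hc : c ≠ b := by
          intro hcb
          exact hb a l (Set.mem_union_left _ (hcb ▸ hl))
        exact .head ⟨l, hl⟩ (ih hc)
      · exact absurd (hN _ hl) hxb
  · intro h
    exact ReflTransGen.mono (fun a b hab => by obtain ⟨l, hl⟩ := hab; exact ⟨l, Set.mem_union_left _ hl⟩) _ _ h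

lemma proj_union_ne {A N : Set (ℕ × L × ℕ)} {b : ℕ}
    (hb : ∀ y l, (y, l, b) ∉ A ∪ N) (hN : ∀ p ∈ N, (p : ℕ × L × ℕ).1 = b)
    {φ φ' : ℕ → Set (BNode n)} (hφ : ∀ a, a ≠ b → φ' a = φ a)
    {x : ℕ} (hx : x ≠ b) : projOf (A ∪ N) φ' x = projOf A φ x := by
  have hbA : ∀ y l, (y, l, b) ∉ A := fun y l h => hb y l (Set.mem_union_left _ h)
  ext v
  simp only [projOf, Set.mem_setOf_eq]
  constructor
  · rintro ⟨α', hr, hv⟩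
    have hr' := (reach_union_iff hb hN hx).mp hr
    have hα : α' ≠ b := fun h => hx (reach_eq_of_noIn hbA (h ▸ hr'))
    exact ⟨α', hr', (hφ α' hα) ▸ hv⟩
  · rintro ⟨α', hr, hv⟩
    have hα : α' ≠ b := fun h => hx (reach_eq_of_noIn hbA (h ▸ hr))
    exact ⟨α', (reach_union_iff hb hN hx).mpr hr, (hφ α' hα).symm ▸ hv⟩

lemma mem_proj_union_self {A N : Set (ℕ × L × ℕ)} {b : ℕ}
    (hb : ∀ y l, (y, l, b) ∉ A ∪ N) (hN : ∀ p ∈ N, (p : ℕ × L × ℕ).1 = b)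
    {φ φ' : ℕ → Set (BNode n)} (hφ : ∀ a, a ≠ b → φ' a = φ a) {v : BNode n} :
    v ∈ projOf (A ∪ N) φ' b ↔
      v ∈ φ' b ∨ ∃ t, (∃ l, (b, l, t) ∈ A ∪ N) ∧ v ∈ projOf A φ t := by
  constructor
  · rintro ⟨α', hr, hv⟩
    rcases hr.cases_head with h | ⟨t, ⟨l, hl⟩, hrest⟩
    · exact Or.inl (h ▸ hv)
    · have ht : t ≠ b := fun h => hb b l (h ▸ hl)
      refine Or.inr ⟨t, ⟨l, hl⟩, ?_⟩
      have heq : projOf (A ∪ N) φ' t = projOf A φ t := proj_union_ne hb hN hφ ht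
      exact heq ▸ (⟨α', hrest, hv⟩ : v ∈ projOf (A ∪ N) φ' t)
  · rintro (hv | ⟨t, ⟨l, hl⟩, hv⟩)
    · exact ⟨b, .refl, hv⟩
    · have ht : t ≠ b := fun h => hb b l (h ▸ hl)
      have hv' : v ∈ projOf (A ∪ N) φ' t := (proj_union_ne hb hN hφ ht).symm ▸ hv
      obtain ⟨α', hr, hv''⟩ := hv'
      exact ⟨α', .head ⟨l, hl⟩ hr, hv''⟩

lemma mem_projOf_iff {A : Set (ℕ × L × ℕ)} {φ : ℕ → Set (BNode n)} {b : ℕ} {v : BNode n} :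
    v ∈ projOf A φ b ↔ v ∈ φ b ∨ ∃ t, (∃ l, (b, l, t) ∈ A) ∧ v ∈ projOf A φ t := by
  constructor
  · rintro ⟨α', hr, hv⟩
    rcases hr.cases_head with h | ⟨t, hl, hrest⟩
    · exact Or.inl (h ▸ hv)
    · exact Or.inr ⟨t, hl, α', hrest, hv⟩
  · rintro (hv | ⟨t, ⟨l, hl⟩, α', hr, hv⟩)
    · exact ⟨b, .refl, hv⟩
    · exact ⟨α', .head ⟨l, hl⟩ hr, hv⟩

lemma proj_union_single {A : Set (ℕ × L × ℕ)} {b s : ℕ} {l0 : L}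
    (hb : ∀ y l, (y, l, b) ∉ A ∪ {(b, l0, s)})
    {φ φ' : ℕ → Set (BNode n)} (hφ : ∀ a, a ≠ b → φ' a = φ a)
    (h1 : φ b ⊆ φ' b) (h2 : φ' b ⊆ φ b ∪ projOf A φ s) :
    projOf (A ∪ {(b, l0, s)}) φ' b = projOf A φ b ∪ projOf A φ s := by
  have hN : ∀ p ∈ ({(b, l0, s)} : Set (ℕ × L × ℕ)), (p : ℕ × L × ℕ).1 = b := by
    rintro p hp
    rw [Set.mem_singleton_iff] at hp
    subst hp; rfl
  ext v
  rw [Set.mem_union, mem_proj_union_self hb hN hφ, mem_projOf_iff (b := b)]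
  constructor
  · rintro (hv | ⟨t, ⟨l, hl⟩, hv⟩)
    · rcases h2 hv with h | h
      · exact Or.inl (Or.inl h)
      · exact Or.inr h
    · rcases hl with hl | hl
      · exact Or.inl (Or.inr ⟨t, ⟨l, hl⟩, hv⟩)
      · rw [Set.mem_singleton_iff, Prod.mk.injEq, Prod.mk.injEq] at hl
        exact Or.inr (hl.2.2 ▸ hv)
  · rintro ((hv | ⟨t, ⟨l, hl⟩, hv⟩) | hv)
    · exact Or.inl (h1 hv)
    · exact Or.inr ⟨t, ⟨l, Set.mem_union_left _ hl⟩, hv⟩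
    · exact Or.inr ⟨s, ⟨l0, Set.mem_union_right _ rfl⟩, hv⟩

lemma proj_union_open {A : Set (ℕ × L × ℕ)} {b s1 s2 : ℕ} {l1 l2 : L}
    (hb : ∀ y l, (y, l, b) ∉ A ∪ {(b, l1, s1), (b, l2, s2)})
    (hout : ∀ t l, (b, l, t) ∉ A)
    {φ φ' : ℕ → Set (BNode n)} (hφ : ∀ a, a ≠ b → φ' a = φ a)
    (hz : φ' b = projOf A φ s1 ∪ projOf A φ s2) :
    projOf (A ∪ {(b, l1, s1), (b, l2, s2)}) φ' b = projOf A φ s1 ∪ projOf A φ s2 := by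
  have hN : ∀ p ∈ ({(b, l1, s1), (b, l2, s2)} : Set (ℕ × L × ℕ)), (p : ℕ × L × ℕ).1 = b := by
    rintro p hp
    rcases hp with hp | hp
    · subst hp; rfl
    · rw [Set.mem_singleton_iff] at hp; subst hp; rfl
  ext v
  rw [mem_proj_union_self hb hN hφ]
  constructor
  · rintro (hv | ⟨t, ⟨l, hl⟩, hv⟩)
    · exact hz ▸ hv
    · rcases hl with hl | hl
      · exact absurd hl (hout t l)
      · rcases hl with hl | hl
        · rw [Prod.mk.injEq, Prod.mk.injEq] at hl
          exact Or.inl (hl.2.2 ▸ hv)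
        · rw [Set.mem_singleton_iff, Prod.mk.injEq, Prod.mk.injEq] at hl
          exact Or.inr (hl.2.2 ▸ hv)
  · intro hv
    exact Or.inl (hz.symm ▸ hv)

lemma insert_eq_union' {A : Set (ℕ × L × ℕ)} {p : ℕ × L × ℕ} :
    insert p A = A ∪ {p} := (Set.union_singleton).symm

lemma insert2_eq_union {A : Set (ℕ × L × ℕ)} {p q : ℕ × L × ℕ} :
    insert p (insert q A) = A ∪ {p, q} := by
  ext x
  simp only [Set.mem_insert_iff, Set.mem_union, Set.mem_singleton_iff]
  tauto

lemma projOf_empty {φ : ℕ → Set (BNode n)} {x : ℕ} :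
    projOf (∅ : Set (ℕ × L × ℕ)) φ x = φ x := by
  ext v
  simp only [projOf, Set.mem_setOf_eq]
  constructor
  · rintro ⟨α', hr, hv⟩
    rcases hr.cases_head with h | ⟨t, ⟨l, hl⟩, _⟩
    · exact h ▸ hv
    · exact absurd hl (Set.notMem_empty _)
  · intro hv
    exact ⟨x, .refl, hv⟩

lemma contig_of_cover {g : ℕ → Set (BNode n)} {l : List ℕ}
    (hord : l.Pairwise (Rel g)) (hcov : ∀ v : BNode n, ∃ a ∈ l, v ∈ g a)
    {a : ℕ} (ha : a ∈ l) : Contig (g a) := by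
  intro i j k hik hkj hi hj
  obtain ⟨b, hb, hk⟩ := hcov (some k)
  by_cases hab : b = a
  · exact hab ▸ hk
  · have hsym : l.Pairwise (fun x y => Rel g x y ∨ Rel g y x) :=
      hord.imp Or.inl
    haveI : Std.Symm (fun x y => Rel g x y ∨ Rel g y x) := ⟨fun x y h => h.symm⟩
    have := hsym.forall ha hb (fun h => hab h.symm)
    rcases this with h | h
    · have := h _ hj _ hk
      simp only [fval, Option.elim] at this
      have hkj' : (k : ℕ) < (j : ℕ) := hkj
      omega
    · have := h _ hk _ hi
      simp only [fval, Option.elim] at this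
      have hik' : (i : ℕ) < (k : ℕ) := hik
      omega

lemma contig_subsingleton {S : Set (BNode n)}
    (h : ∀ v ∈ S, ∀ w ∈ S, v = w) : Contig S := by
  intro i j k hik hkj hi hj
  have hij : i = j := Option.some_injective _ (h _ hi _ hj)
  have h1 : (i : ℕ) < (k : ℕ) := hik
  have h2 : (k : ℕ) < (j : ℕ) := hkj
  rw [hij] at h1
  omega

lemma pairwise_merge {g g' : ℕ → Set (BNode n)} {P Q : List ℕ} {x y z : ℕ}
    (hg : ∀ a, a ≠ z → g' a = g a) (hz : g' z = g x ∪ g y)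
    (hzP : z ∉ P) (hzQ : z ∉ Q)
    (h : (P ++ x :: y :: Q).Pairwise (Rel g)) : (P ++ z :: Q).Pairwise (Rel g') := by
  rw [List.pairwise_append] at h
  obtain ⟨h1, h2, h3⟩ := h
  rw [List.pairwise_cons] at h2
  obtain ⟨hx2, h2⟩ := h2
  rw [List.pairwise_cons] at h2
  obtain ⟨hy2, h2⟩ := h2
  rw [List.pairwise_append]
  refine ⟨?_, ?_, ?_⟩
  · refine h1.imp_of_mem (fun {a b} haP hbP hab => ?_)
    intro v hv w hw
    rw [hg a (fun h => hzP (h ▸ haP))] at hv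
    rw [hg b (fun h => hzP (h ▸ hbP))] at hw
    exact hab v hv w hw
  · rw [List.pairwise_cons]
    constructor
    · intro b hbQ
      intro v hv w hw
      rw [hg b (fun h => hzQ (h ▸ hbQ))] at hw
      rw [hz] at hv
      rcases hv with hv | hv
      · exact hx2 b (List.mem_cons_of_mem _ hbQ) v hv w hw
      · exact hy2 b hbQ v hv w hw
    · refine h2.imp_of_mem (fun {a b} haQ hbQ hab => ?_)
      intro v hv w hw
      rw [hg a (fun h => hzQ (h ▸ haQ))] at hv
      rw [hg b (fun h => hzQ (h ▸ hbQ))] at hw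
      exact hab v hv w hw
  · intro a haP b hb
    rcases List.mem_cons.mp hb with rfl | hbQ
    · intro v hv w hw
      rw [hg a (fun h => hzP (h ▸ haP))] at hv
      rw [hz] at hw
      rcases hw with hw | hw
      · exact h3 a haP x (List.mem_cons_self) v hv w hw
      · exact h3 a haP y (List.mem_cons_of_mem _ (List.mem_cons_self)) v hv w hw
    · intro v hv w hw
      rw [hg a (fun h => hzP (h ▸ haP))] at hv
      rw [hg b (fun h => hzQ (h ▸ hbQ))] at hw
      exact h3 a haP b (List.mem_cons_of_mem _ (List.mem_cons_of_mem _ hbQ)) v hv w hw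

lemma cover_merge {g g' : ℕ → Set (BNode n)} {P Q : List ℕ} {x y z : ℕ}
    (hg : ∀ a, a ≠ z → g' a = g a) (hz : g' z = g x ∪ g y)
    (hzP : z ∉ P) (hzQ : z ∉ Q)
    (h : ∀ v : BNode n, ∃ a ∈ P ++ x :: y :: Q, v ∈ g a) :
    ∀ v : BNode n, ∃ a ∈ P ++ z :: Q, v ∈ g' a := by
  intro v
  obtain ⟨a, ha, hv⟩ := h v
  rcases List.mem_append.mp ha with haP | haC
  · exact ⟨a, List.mem_append.mpr (Or.inl haP),
      (hg a (fun h => hzP (h ▸ haP))).symm ▸ hv⟩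
  · rcases List.mem_cons.mp haC with rfl | haC
    · exact ⟨z, List.mem_append.mpr (Or.inr (List.mem_cons_self)),
        hz.symm ▸ Or.inl hv⟩
    · rcases List.mem_cons.mp haC with rfl | haQ
      · exact ⟨z, List.mem_append.mpr (Or.inr (List.mem_cons_self)),
          hz.symm ▸ Or.inr hv⟩
      · exact ⟨a, List.mem_append.mpr (Or.inr (List.mem_cons_of_mem _ haQ)),
          (hg a (fun h => hzQ (h ▸ haQ))).symm ▸ hv⟩

lemma mem_of_mem_middle {P Q : List ℕ} {z a : ℕ} (h : a ∈ P ++ z :: Q) :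
    a = z ∨ (a ∈ P ∨ a ∈ Q) := by
  rcases List.mem_append.mp h with h | h
  · exact Or.inr (Or.inl h)
  · rcases List.mem_cons.mp h with rfl | h
    · exact Or.inl rfl
    · exact Or.inr (Or.inr h)

lemma mem_middle_of {P Q : List ℕ} {x y a : ℕ} (h : a ∈ P ∨ a ∈ Q) :
    a ∈ P ++ x :: y :: Q := by
  rcases h with h | h
  · exact List.mem_append.mpr (Or.inl h)
  · exact List.mem_append.mpr (Or.inr (List.mem_cons_of_mem _ (List.mem_cons_of_mem _ h)))

lemma mem_middle_x {P Q : List ℕ} {x y : ℕ} : x ∈ P ++ x :: y :: Q :=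
  List.mem_append.mpr (Or.inr (List.mem_cons_self))

lemma mem_middle_y {P Q : List ℕ} {x y : ℕ} : y ∈ P ++ x :: y :: Q :=
  List.mem_append.mpr (Or.inr (List.mem_cons_of_mem _ (List.mem_cons_self)))

lemma nodup_middle2 {P Q : List ℕ} {x y : ℕ} (h : (P ++ x :: y :: Q).Nodup) :
    x ∉ P ∧ x ∉ Q ∧ y ∉ P ∧ y ∉ Q ∧ x ≠ y ∧
      (P ++ Q).Nodup ∧ (P ++ y :: Q).Nodup ∧ (P ++ x :: Q).Nodup := by
  rw [List.nodup_middle, List.nodup_cons] at h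
  obtain ⟨hx, h⟩ := h
  have h' := h
  rw [List.nodup_middle, List.nodup_cons] at h'
  obtain ⟨hy, hPQ⟩ := h'
  refine ⟨?_, ?_, ?_, ?_, ?_, hPQ, h, ?_⟩
  · exact fun hxP => hx (List.mem_append.mpr (Or.inl hxP))
  · exact fun hxQ => hx (List.mem_append.mpr (Or.inr (List.mem_cons_of_mem _ hxQ)))
  · exact fun hyP => hy (List.mem_append.mpr (Or.inl hyP))
  · exact fun hyQ => hy (List.mem_append.mpr (Or.inr hyQ))
  · intro hxy
    exact hx (List.mem_append.mpr (Or.inr (by rw [hxy]; exact List.mem_cons_self)))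
  · rw [List.nodup_middle, List.nodup_cons]
    refine ⟨?_, hPQ⟩
    intro hm
    rcases List.mem_append.mp hm with hm | hm
    · exact hx (List.mem_append.mpr (Or.inl hm))
    · exact hx (List.mem_append.mpr (Or.inr (List.mem_cons_of_mem _ hm)))

lemma inv_init : Inv (initConfig n L) := by
  have hact : active (initConfig n L) = 0 :: (List.range n).map (· + 1) := by
    simp [active, initConfig]
  have hproj : ∀ x, (initConfig n L).proj x = (initConfig n L).content x :=
    fun x => projOf_empty
  have hc0 : (initConfig n L).content 0 = {(none : BNode n)} := by
    ext v
    simp only [initConfig, Set.mem_setOf_eq, Set.mem_singleton_iff]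
    constructor
    · rintro (⟨_, rfl⟩ | ⟨k, hk, rfl⟩)
      · rfl
      · omega
    · rintro rfl
      simp
  have hcS : ∀ k : Fin n, (initConfig n L).content ((k : ℕ) + 1) = {some k} := by
    intro k
    ext v
    simp only [initConfig, Set.mem_setOf_eq, Set.mem_singleton_iff]
    constructor
    · rintro (⟨h, _⟩ | ⟨k', hk', rfl⟩)
      · omega
      · have : k' = k := Fin.ext (by omega)
        rw [this]
    · rintro rfl
      exact Or.inr ⟨k, rfl, rfl⟩
  have hmem : ∀ a ∈ (List.range n).map (· + 1), ∃ k : Fin n, a = (k : ℕ) + 1 := by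
    intro a ha
    rw [List.mem_map] at ha
    obtain ⟨k, hk, rfl⟩ := ha
    rw [List.mem_range] at hk
    exact ⟨⟨k, hk⟩, rfl⟩
  constructor
  · rw [hact, List.nodup_cons]
    constructor
    · intro h
      obtain ⟨k, hk⟩ := hmem 0 h
      omega
    · exact List.Nodup.map (fun a b => by omega) (List.nodup_range)
  · rw [hact]
    intro a ha
    show a ∈ Finset.range (n + 1)
    rw [Finset.mem_range]
    rcases List.mem_cons.mp ha with rfl | ha
    · omega
    · obtain ⟨k, rfl⟩ := hmem a ha
      have := k.isLt
      omega
  · intro p hp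
    exact absurd hp (Set.notMem_empty _)
  · intro a _ x l hl
    exact absurd hl (Set.notMem_empty _)
  · rw [hact, List.pairwise_cons]
    constructor
    · intro b hb
      obtain ⟨k, rfl⟩ := hmem b hb
      intro v hv w hw
      rw [hproj, hc0] at hv
      rw [hproj, hcS k] at hw
      rw [Set.mem_singleton_iff] at hv hw
      subst hv; subst hw
      simp [fval]
    · rw [List.pairwise_map]
      refine (List.pairwise_lt_range).imp_of_mem (fun {a b} ha hb hab => ?_)
      rw [List.mem_range] at ha hb
      intro v hv w hw
      rw [hproj, hcS ⟨a, ha⟩] at hv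
      rw [hproj, hcS ⟨b, hb⟩] at hw
      rw [Set.mem_singleton_iff] at hv hw
      subst hv; subst hw
      simp only [fval, Option.elim]
      omega
  · intro v
    match v with
    | none =>
      refine ⟨0, ?_, ?_⟩
      · rw [hact]; exact List.mem_cons_self
      · rw [hproj, hc0]; rfl
    | some k =>
      refine ⟨(k : ℕ) + 1, ?_, ?_⟩
      · rw [hact]
        refine List.mem_cons_of_mem _ ?_
        rw [List.mem_map]
        exact ⟨(k : ℕ), List.mem_range.mpr k.isLt, rfl⟩
      · rw [hproj, hcS k]; rfl
  · intro α hα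
    have hα' : α < n + 1 := Finset.mem_range.mp hα
    rcases Nat.eq_zero_or_pos α with rfl | hpos
    · refine contig_subsingleton ?_
      intro v hv w hw
      rw [hproj, hc0, Set.mem_singleton_iff] at hv hw
      rw [hv, hw]
    · have hk : α - 1 < n := by omega
      have hαeq : α = ((⟨α - 1, hk⟩ : Fin n) : ℕ) + 1 := by simp; omega
      refine contig_subsingleton ?_
      intro v hv w hw
      rw [hproj, hαeq, hcS, Set.mem_singleton_iff] at hv hw
      rw [hv, hw]

lemma inv_congr {c c' : Config n L} (hc : Inv c) (hact : active c' = active c)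
    (hb : c'.bubbles = c.bubbles) (harc : c'.arcs = c.arcs) (hφ : c'.content = c.content) :
    Inv c' := by
  have hp : Config.proj c' = Config.proj c := by
    funext a
    show projOf c'.arcs c'.content a = projOf c.arcs c.content a
    rw [harc, hφ]
  constructor
  · rw [hact]; exact hc.nodup
  · rw [hact, hb]; exact hc.memB
  · rw [harc, hb]; exact hc.arcmem
  · rw [hact, harc]; exact hc.noIn
  · rw [hact, hp]; exact hc.ord
  · intro v
    obtain ⟨a, ha, hv⟩ := hc.cover v
    exact ⟨a, by rw [hact]; exact ha, by rw [hp]; exact hv⟩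
  · simp only [hb, hp]
    exact hc.contig

lemma inv_merge {c c' : Config n L} (hc : Inv c)
    {P Q : List ℕ} {x y z : ℕ}
    (hact : active c = P ++ x :: y :: Q)
    (hact' : active c' = P ++ z :: Q)
    (hzPQ : z ∉ P ∧ z ∉ Q)
    (hbub : ∀ a, a ∈ c.bubbles → a ∈ c'.bubbles)
    (hzB : z ∈ c'.bubbles)
    (harcmem : ∀ p ∈ c'.arcs, (p : ℕ × L × ℕ).1 ∈ c'.bubbles ∧ p.2.2 ∈ c'.bubbles)
    (hnoIn : ∀ a ∈ active c', ∀ x' l, (x', l, a) ∉ c'.arcs)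
    (hnd' : (P ++ z :: Q).Nodup)
    (hpe : ∀ a, a ≠ z → c'.proj a = c.proj a)
    (hpz : c'.proj z = c.proj x ∪ c.proj y)
    (hbubnew : ∀ α ∈ c'.bubbles, α ∉ c.bubbles → α = z) :
    Inv c' := by
  have hord' : (P ++ z :: Q).Pairwise (Rel c'.proj) :=
    pairwise_merge hpe hpz hzPQ.1 hzPQ.2 (hact ▸ hc.ord)
  have hcov' : ∀ v : BNode n, ∃ a ∈ P ++ z :: Q, v ∈ c'.proj a :=
    cover_merge hpe hpz hzPQ.1 hzPQ.2 (fun v => hact ▸ hc.cover v)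
  constructor
  · rw [hact']; exact hnd'
  · rw [hact']
    intro a ha
    rcases mem_of_mem_middle ha with rfl | hPQ
    · exact hzB
    · exact hbub a (hc.memB a (by rw [hact]; exact mem_middle_of hPQ))
  · exact harcmem
  · exact hnoIn
  · rw [hact']; exact hord'
  · intro v
    obtain ⟨a, ha, hv⟩ := hcov' v
    exact ⟨a, by rw [hact']; exact ha, hv⟩
  · intro α hα
    by_cases hz : α = z
    · subst hz
      exact contig_of_cover hord' hcov'
        (List.mem_append.mpr (Or.inr (List.mem_cons_self)))
    · have hαB : α ∈ c.bubbles := by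
        by_contra hno
        exact hz (hbubnew α hα hno)
      rw [hpe α hz]
      exact hc.contig α hαB

lemma inv_step {conj : L} {c c' : Config n L} (h : Step conj c c') (hc : Inv c) : Inv c' := by
  cases h with
  | shift b1 β hbuf =>
    exact inv_congr hc (by simp [active, hbuf]) rfl rfl rfl
  | bubbleClose s1 σ hstk hs1 =>
    exact inv_congr hc (by simp [active, hstk]) rfl rfl rfl
  | leftArc lbl s1 σ b1 β hstk hbuf hs1o hb1o hroot =>
    have hact : active c = σ.reverse ++ s1 :: b1 :: β := by
      simp [active, hstk, hbuf]
    have hnd := hact ▸ hc.nodup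
    obtain ⟨hxP, hxQ, hyP, hyQ, hxy, hPQ, hndy, hndx⟩ := nodup_middle2 hnd
    have hs1mem : s1 ∈ active c := by rw [hact]; exact mem_middle_x
    have hb1mem : b1 ∈ active c := by rw [hact]; exact mem_middle_y
    have harcs : insert (b1, lbl, s1) c.arcs = c.arcs ∪ {(b1, lbl, s1)} := insert_eq_union'
    have hbni : ∀ y' l, (y', l, b1) ∉ c.arcs ∪ {(b1, lbl, s1)} := by
      intro y' l hl
      rcases hl with hl | hl
      · exact hc.noIn b1 hb1mem y' l hl
      · rw [Set.mem_singleton_iff, Prod.mk.injEq, Prod.mk.injEq] at hl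
        exact hxy hl.2.2.symm
    have hNs : ∀ p ∈ ({(b1, lbl, s1)} : Set (ℕ × L × ℕ)), (p : ℕ × L × ℕ).1 = b1 := by
      rintro p hp
      rw [Set.mem_singleton_iff] at hp
      subst hp; rfl
    have hpe : ∀ a, a ≠ b1 →
        Config.proj { c with stack := σ, arcs := insert (b1, lbl, s1) c.arcs } a = c.proj a := by
      intro a ha
      show projOf (insert (b1, lbl, s1) c.arcs) c.content a = c.proj a
      rw [harcs]
      exact proj_union_ne hbni hNs (fun _ _ => rfl) ha
    have hpz : Config.proj { c with stack := σ, arcs := insert (b1, lbl, s1) c.arcs } b1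
        = c.proj s1 ∪ c.proj b1 := by
      show projOf (insert (b1, lbl, s1) c.arcs) c.content b1 = _
      rw [harcs, proj_union_single hbni (fun _ _ => rfl) (fun v hv => hv) (fun v hv => Or.inl hv),
        Set.union_comm]
      rfl
    have hact' : active { c with stack := σ, arcs := insert (b1, lbl, s1) c.arcs }
        = σ.reverse ++ b1 :: β := by
      simp [active, hbuf]
    refine inv_merge hc hact hact' ⟨hyP, hyQ⟩ (fun a ha => ha) (hc.memB b1 hb1mem)
      ?_ ?_ hndy hpe hpz (fun α hα hno => absurd hα hno)
    · intro p hp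
      have hp' : p ∈ insert (b1, lbl, s1) c.arcs := hp
      show p.1 ∈ c.bubbles ∧ p.2.2 ∈ c.bubbles
      rw [Set.mem_insert_iff] at hp'
      rcases hp' with rfl | hp'
      · exact ⟨hc.memB b1 hb1mem, hc.memB s1 hs1mem⟩
      · exact hc.arcmem p hp'
    · intro a ha x' l hl
      have ha' : a ∈ σ.reverse ++ b1 :: β := by rwa [hact'] at ha
      have hl' : (x', l, a) ∈ insert (b1, lbl, s1) c.arcs := hl
      rw [Set.mem_insert_iff] at hl'
      rcases hl' with heq | hl'
      · have has1 : a = s1 := congrArg (fun q => q.2.2) heq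
        subst has1
        rcases mem_of_mem_middle ha' with h | h
        · exact hxy h
        · rcases h with h | h
          · exact hxP h
          · exact hxQ h
      · have haold : a ∈ active c := by
          rw [hact]
          rcases mem_of_mem_middle ha' with rfl | h
          · exact mem_middle_y
          · exact mem_middle_of h
        exact hc.noIn a haold x' l hl'
  | rightArc lbl s1 s2 σ hstk hs1o hs2o =>
    have hact : active c = σ.reverse ++ s2 :: s1 :: c.buffer := by
      simp [active, hstk]
    have hnd := hact ▸ hc.nodup
    obtain ⟨hxP, hxQ, hyP, hyQ, hxy, hPQ, hndy, hndx⟩ := nodup_middle2 hnd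
    have hs2mem : s2 ∈ active c := by rw [hact]; exact mem_middle_x
    have hs1mem : s1 ∈ active c := by rw [hact]; exact mem_middle_y
    have harcs : insert (s2, lbl, s1) c.arcs = c.arcs ∪ {(s2, lbl, s1)} := insert_eq_union'
    have hbni : ∀ y' l, (y', l, s2) ∉ c.arcs ∪ {(s2, lbl, s1)} := by
      intro y' l hl
      rcases hl with hl | hl
      · exact hc.noIn s2 hs2mem y' l hl
      · rw [Set.mem_singleton_iff, Prod.mk.injEq, Prod.mk.injEq] at hl
        exact hxy hl.2.2
    have hNs : ∀ p ∈ ({(s2, lbl, s1)} : Set (ℕ × L × ℕ)), (p : ℕ × L × ℕ).1 = s2 := by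
      rintro p hp
      rw [Set.mem_singleton_iff] at hp
      subst hp; rfl
    have hpe : ∀ a, a ≠ s2 →
        Config.proj { c with stack := s2 :: σ, arcs := insert (s2, lbl, s1) c.arcs } a
          = c.proj a := by
      intro a ha
      show projOf (insert (s2, lbl, s1) c.arcs) c.content a = c.proj a
      rw [harcs]
      exact proj_union_ne hbni hNs (fun _ _ => rfl) ha
    have hpz : Config.proj { c with stack := s2 :: σ, arcs := insert (s2, lbl, s1) c.arcs } s2
        = c.proj s2 ∪ c.proj s1 := by
      show projOf (insert (s2, lbl, s1) c.arcs) c.content s2 = _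
      rw [harcs, proj_union_single hbni (fun _ _ => rfl) (fun v hv => hv) (fun v hv => Or.inl hv)]
      rfl
    have hact' : active { c with stack := s2 :: σ, arcs := insert (s2, lbl, s1) c.arcs }
        = σ.reverse ++ s2 :: c.buffer := by
      simp [active]
    refine inv_merge hc hact hact' ⟨hxP, hxQ⟩ (fun a ha => ha) (hc.memB s2 hs2mem)
      ?_ ?_ hndx hpe hpz (fun α hα hno => absurd hα hno)
    · intro p hp
      have hp' : p ∈ insert (s2, lbl, s1) c.arcs := hp
      show p.1 ∈ c.bubbles ∧ p.2.2 ∈ c.bubbles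
      rw [Set.mem_insert_iff] at hp'
      rcases hp' with rfl | hp'
      · exact ⟨hc.memB s2 hs2mem, hc.memB s1 hs1mem⟩
      · exact hc.arcmem p hp'
    · intro a ha x' l hl
      have ha' : a ∈ σ.reverse ++ s2 :: c.buffer := by rwa [hact'] at ha
      have hl' : (x', l, a) ∈ insert (s2, lbl, s1) c.arcs := hl
      rw [Set.mem_insert_iff] at hl'
      rcases hl' with heq | hl'
      · have has1 : a = s1 := congrArg (fun q => q.2.2) heq
        subst has1
        rcases mem_of_mem_middle ha' with h | h
        · exact hxy h.symm
        · rcases h with h | h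
          · exact hyP h
          · exact hyQ h
      · have haold : a ∈ active c := by
          rw [hact]
          rcases mem_of_mem_middle ha' with rfl | h
          · exact mem_middle_x
          · exact mem_middle_of h
        exact hc.noIn a haold x' l hl'
  | bubbleAttach lbl s1 s2 σ hstk hs1o hs2o =>
    have hact : active c = σ.reverse ++ s2 :: s1 :: c.buffer := by
      simp [active, hstk]
    have hnd := hact ▸ hc.nodup
    obtain ⟨hxP, hxQ, hyP, hyQ, hxy, hPQ, hndy, hndx⟩ := nodup_middle2 hnd
    have hs2mem : s2 ∈ active c := by rw [hact]; exact mem_middle_x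
    have hs1mem : s1 ∈ active c := by rw [hact]; exact mem_middle_y
    have harcs : insert (s2, lbl, s1) c.arcs = c.arcs ∪ {(s2, lbl, s1)} := insert_eq_union'
    have hbni : ∀ y' l, (y', l, s2) ∉ c.arcs ∪ {(s2, lbl, s1)} := by
      intro y' l hl
      rcases hl with hl | hl
      · exact hc.noIn s2 hs2mem y' l hl
      · rw [Set.mem_singleton_iff, Prod.mk.injEq, Prod.mk.injEq] at hl
        exact hxy hl.2.2
    have hNs : ∀ p ∈ ({(s2, lbl, s1)} : Set (ℕ × L × ℕ)), (p : ℕ × L × ℕ).1 = s2 := by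
      rintro p hp
      rw [Set.mem_singleton_iff] at hp
      subst hp; rfl
    have hφ : ∀ a, a ≠ s2 →
        Function.update c.content s2 (c.content s2 ∪ c.proj s1) a = c.content a :=
      fun a ha => Function.update_of_ne ha _ _
    have hpe : ∀ a, a ≠ s2 →
        Config.proj { c with stack := s2 :: σ, content := Function.update c.content s2 (c.content s2 ∪ c.proj s1), arcs := insert (s2, lbl, s1) c.arcs } a = c.proj a := by
      intro a ha
      show projOf (insert (s2, lbl, s1) c.arcs)
        (Function.update c.content s2 (c.content s2 ∪ c.proj s1)) a = c.proj a
      rw [harcs]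
      exact proj_union_ne hbni hNs hφ ha
    have hpz : Config.proj { c with stack := s2 :: σ, content := Function.update c.content s2 (c.content s2 ∪ c.proj s1), arcs := insert (s2, lbl, s1) c.arcs } s2 = c.proj s2 ∪ c.proj s1 := by
      show projOf (insert (s2, lbl, s1) c.arcs)
        (Function.update c.content s2 (c.content s2 ∪ c.proj s1)) s2 = _
      rw [harcs]
      refine proj_union_single hbni hφ ?_ ?_
      · rw [Function.update_self]
        exact Set.subset_union_left
      · rw [Function.update_self]
        exact subset_rfl
    have hact' : active { c with stack := s2 :: σ, content := Function.update c.content s2 (c.content s2 ∪ c.proj s1), arcs := insert (s2, lbl, s1) c.arcs } = σ.reverse ++ s2 :: c.buffer := by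
      simp [active]
    refine inv_merge hc hact hact' ⟨hxP, hxQ⟩ (fun a ha => ha) (hc.memB s2 hs2mem)
      ?_ ?_ hndx hpe hpz (fun α hα hno => absurd hα hno)
    · intro p hp
      have hp' : p ∈ insert (s2, lbl, s1) c.arcs := hp
      show p.1 ∈ c.bubbles ∧ p.2.2 ∈ c.bubbles
      rw [Set.mem_insert_iff] at hp'
      rcases hp' with rfl | hp'
      · exact ⟨hc.memB s2 hs2mem, hc.memB s1 hs1mem⟩
      · exact hc.arcmem p hp'
    · intro a ha x' l hl
      have ha' : a ∈ σ.reverse ++ s2 :: c.buffer := by rwa [hact'] at ha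
      have hl' : (x', l, a) ∈ insert (s2, lbl, s1) c.arcs := hl
      rw [Set.mem_insert_iff] at hl'
      rcases hl' with heq | hl'
      · have has1 : a = s1 := congrArg (fun q => q.2.2) heq
        subst has1
        rcases mem_of_mem_middle ha' with h | h
        · exact hxy h.symm
        · rcases h with h | h
          · exact hyP h
          · exact hyQ h
      · have haold : a ∈ active c := by
          rw [hact]
          rcases mem_of_mem_middle ha' with rfl | h
          · exact mem_middle_x
          · exact mem_middle_of h
        exact hc.noIn a haold x' l hl'
  | bubbleOpen lbl s1 s2 σ α hstk hs1o hs2o hroot hfresh =>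
    have hact : active c = σ.reverse ++ s2 :: s1 :: c.buffer := by
      simp [active, hstk]
    have hnd := hact ▸ hc.nodup
    obtain ⟨hxP, hxQ, hyP, hyQ, hxy, hPQ, hndy, hndx⟩ := nodup_middle2 hnd
    have hs2mem : s2 ∈ active c := by rw [hact]; exact mem_middle_x
    have hs1mem : s1 ∈ active c := by rw [hact]; exact mem_middle_y
    have hs2B := hc.memB s2 hs2mem
    have hs1B := hc.memB s1 hs1mem
    have hαs2 : s2 ≠ α := fun h => hfresh (h ▸ hs2B)
    have hαs1 : s1 ≠ α := fun h => hfresh (h ▸ hs1B)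
    have hαact : α ∉ active c := fun h => hfresh (hc.memB α h)
    have hαP : α ∉ σ.reverse := fun h => hαact (by rw [hact]; exact mem_middle_of (Or.inl h))
    have hαQ : α ∉ c.buffer := fun h => hαact (by rw [hact]; exact mem_middle_of (Or.inr h))
    have harcs : insert (α, conj, s2) (insert (α, lbl, s1) c.arcs)
        = c.arcs ∪ {(α, conj, s2), (α, lbl, s1)} := insert2_eq_union
    have hbni : ∀ y' l, (y', l, α) ∉ c.arcs ∪ {(α, conj, s2), (α, lbl, s1)} := by
      intro y' l hl
      rcases hl with hl | hl
      · exact hfresh ((hc.arcmem _ hl).2)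
      · rcases hl with hl | hl
        · rw [Prod.mk.injEq, Prod.mk.injEq] at hl
          exact hαs2 hl.2.2.symm
        · rw [Set.mem_singleton_iff, Prod.mk.injEq, Prod.mk.injEq] at hl
          exact hαs1 hl.2.2.symm
    have hout : ∀ t l, (α, l, t) ∉ c.arcs := fun t l hl => hfresh ((hc.arcmem _ hl).1)
    have hNs : ∀ p ∈ ({(α, conj, s2), (α, lbl, s1)} : Set (ℕ × L × ℕ)),
        (p : ℕ × L × ℕ).1 = α := by
      rintro p hp
      rcases hp with hp | hp
      · subst hp; rfl
      · rw [Set.mem_singleton_iff] at hp; subst hp; rfl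
    have hφ : ∀ a, a ≠ α →
        Function.update c.content α (c.proj s2 ∪ c.proj s1) a = c.content a :=
      fun a ha => Function.update_of_ne ha _ _
    have hpe : ∀ a, a ≠ α →
        Config.proj { stack := α :: σ, buffer := c.buffer, bubbles := insert α c.bubbles, content := Function.update c.content α (c.proj s2 ∪ c.proj s1), arcs := insert (α, conj, s2) (insert (α, lbl, s1) c.arcs), openB := insert α c.openB } a = c.proj a := by
      intro a ha
      show projOf (insert (α, conj, s2) (insert (α, lbl, s1) c.arcs))
        (Function.update c.content α (c.proj s2 ∪ c.proj s1)) a = c.proj a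
      rw [harcs]
      exact proj_union_ne hbni hNs hφ ha
    have hpz : Config.proj { stack := α :: σ, buffer := c.buffer, bubbles := insert α c.bubbles, content := Function.update c.content α (c.proj s2 ∪ c.proj s1), arcs := insert (α, conj, s2) (insert (α, lbl, s1) c.arcs), openB := insert α c.openB } α = c.proj s2 ∪ c.proj s1 := by
      show projOf (insert (α, conj, s2) (insert (α, lbl, s1) c.arcs))
        (Function.update c.content α (c.proj s2 ∪ c.proj s1)) α = _
      rw [harcs]
      refine proj_union_open hbni hout hφ ?_
      rw [Function.update_self]
      rfl
    have hact' : active { stack := α :: σ, buffer := c.buffer, bubbles := insert α c.bubbles, content := Function.update c.content α (c.proj s2 ∪ c.proj s1), arcs := insert (α, conj, s2) (insert (α, lbl, s1) c.arcs), openB := insert α c.openB } = σ.reverse ++ α :: c.buffer := by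
      simp [active]
    have hnd' : (σ.reverse ++ α :: c.buffer).Nodup := by
      rw [List.nodup_middle, List.nodup_cons]
      refine ⟨?_, hPQ⟩
      intro hm
      rcases List.mem_append.mp hm with hm | hm
      · exact hαP hm
      · exact hαQ hm
    refine inv_merge hc hact hact' ⟨hαP, hαQ⟩
      (fun a ha => Finset.mem_insert_of_mem ha) (Finset.mem_insert_self _ _)
      ?_ ?_ hnd' hpe hpz
      (fun α' hα' hno => by
        rcases Finset.mem_insert.mp hα' with h | h
        · exact h
        · exact absurd h hno)
    · intro p hp
      have hp' : p ∈ insert (α, conj, s2) (insert (α, lbl, s1) c.arcs) := hp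
      show p.1 ∈ insert α c.bubbles ∧ p.2.2 ∈ insert α c.bubbles
      rw [Set.mem_insert_iff, Set.mem_insert_iff] at hp'
      rcases hp' with rfl | rfl | hp'
      · exact ⟨Finset.mem_insert_self _ _, Finset.mem_insert_of_mem hs2B⟩
      · exact ⟨Finset.mem_insert_self _ _, Finset.mem_insert_of_mem hs1B⟩
      · exact ⟨Finset.mem_insert_of_mem (hc.arcmem p hp').1,
          Finset.mem_insert_of_mem (hc.arcmem p hp').2⟩
    · intro a ha x' l hl
      have ha' : a ∈ σ.reverse ++ α :: c.buffer := by rwa [hact'] at ha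
      have hl' : (x', l, a) ∈ insert (α, conj, s2) (insert (α, lbl, s1) c.arcs) := hl
      rw [Set.mem_insert_iff, Set.mem_insert_iff] at hl'
      rcases hl' with heq | heq | hl'
      · have has2 : a = s2 := congrArg (fun q => q.2.2) heq
        subst has2
        rcases mem_of_mem_middle ha' with h | h
        · exact hαs2 h
        · rcases h with h | h
          · exact hxP h
          · exact hxQ h
      · have has1 : a = s1 := congrArg (fun q => q.2.2) heq
        subst has1
        rcases mem_of_mem_middle ha' with h | h
        · exact hαs1 h
        · rcases h with h | h
          · exact hyP h
          · exact hyQ h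
      · rcases mem_of_mem_middle ha' with rfl | h
        · exact hfresh (hc.arcmem _ hl').2
        · exact hc.noIn a (by rw [hact]; exact mem_middle_of h) x' l hl'

end BubbleInv

/-- **(Continuous-projections invariant)** In every reachable configuration,
every bubble's projection is a contiguous set of words. -/
theorem continuousProjections_invariant (n : ℕ) (L : Type*) [Fintype L] (conj : L)
    (c : Config n L) (hreach : Reachable conj c) :
    ∀ α ∈ c.bubbles, ∀ i j k : Fin n, i < k → k < j →
      some i ∈ c.proj α → some j ∈ c.proj α → some k ∈ c.proj α := by
  have hinv : BubbleInv.Inv c := by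
    have h : Relation.ReflTransGen (Step conj) (initConfig n L) c := hreach
    clear hreach
    induction h with
    | refl => exact BubbleInv.inv_init
    | tail hs ht ih => exact BubbleInv.inv_step ht ih
  exact fun α hα i j k hik hkj hi hj => hinv.contig α hα i j k hik hkj hi hj
end
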